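/- arXiv:2508.17641 — 5 statements merged into one kernel-verified Lean document; each statement's English description precedes it below -/
import Mathlib

section
/- Let n, d be positive integers and ε with 0 < ε ≤ 1/3, and let r, c ∈ ℝⁿ be nonnegative with Σᵢ rᵢ = Σⱼ cⱼ = 1. For any two elements (P,S,T,E,q) and (P',S',T',E',q') of the feasible set Q of the entropic martingale optimal transport problem, one has H(P,S,T,E,q) − H(P',S',T',E',q') ≤ 2·log n + 3ε·log((3nd + 1)/(3ε)). -/
open Matrix

noncomputable section

/-- Entropy function with the convention `0 * log 0 = 0` (note `Real.log 0 = 0`). -/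
def ent (x : ℝ) : ℝ := x * Real.log x

/-- Entropy of the tuple of variables of the entropic MOT problem. -/
def Htot {n d : ℕ} (P : Matrix (Fin n) (Fin n) ℝ) (S T E : Matrix (Fin n) (Fin d) ℝ)
    (q : ℝ) : ℝ :=
  (∑ i, ∑ j, ent (P i j)) + (∑ i, ∑ k, (ent (S i k) + ent (T i k) + ent (E i k))) + ent q

/-- The feasible set of the entropic martingale optimal transport problem. -/
def FeasQ {n d : ℕ} (V W : Matrix (Fin n) (Fin d) ℝ) (r c : Fin n → ℝ) (ε : ℝ)
    (P : Matrix (Fin n) (Fin n) ℝ) (S T E : Matrix (Fin n) (Fin d) ℝ) (q : ℝ) : Prop :=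
  (∀ i, ∑ j, P i j = r i) ∧ (∀ j, ∑ i, P i j = c j) ∧
  S = W - P * V + E ∧ T = P * V - W + E ∧
  (∑ i, ∑ k, E i k) + q = ε ∧
  (∀ i j, 0 ≤ P i j) ∧ (∀ i k, 0 ≤ S i k) ∧ (∀ i k, 0 ≤ T i k) ∧
  (∀ i k, 0 ≤ E i k) ∧ 0 ≤ q

lemma jensen_ent {ι : Type*} [Fintype ι] [Nonempty ι] (x : ι → ℝ) (hx : ∀ i, 0 ≤ x i) :
    (∑ i, x i) * Real.log ((∑ i, x i) / (Fintype.card ι)) ≤ ∑ i, ent (x i) := by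
  set m : ℝ := (Fintype.card ι : ℝ) with hm
  have hm0 : 0 < m := by rw [hm]; exact_mod_cast Fintype.card_pos (α := ι)
  have h := Real.convexOn_mul_log.map_sum_le (t := Finset.univ) (w := fun _ => 1/m) (p := x)
    (fun i _ => by positivity)
    (by simp only [Finset.sum_const, Finset.card_univ, nsmul_eq_mul]; field_simp; exact hm.symm)
    (fun i _ => hx i)
  simp only [smul_eq_mul, ← Finset.mul_sum] at h
  have hrw : (∑ i, x i) * Real.log ((∑ i, x i) / m)
      = m * ((1/m * ∑ i, x i) * Real.log (1/m * ∑ i, x i)) := by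
    rw [one_div, inv_mul_eq_div]
    field_simp
  rw [hrw]
  calc m * ((1/m * ∑ i, x i) * Real.log (1/m * ∑ i, x i))
      ≤ m * (1/m * ∑ i, x i * Real.log (x i)) := by
        apply mul_le_mul_of_nonneg_left h hm0.le
    _ = ∑ i, ent (x i) := by simp only [ent]; field_simp

lemma ent_anti {a b : ℝ} (ha : 0 ≤ a) (hab : a ≤ b) (hb : b ≤ Real.exp (-1)) : ent b ≤ ent a := by
  have H : AntitoneOn (fun x : ℝ => x * Real.log x) (Set.Icc 0 (Real.exp (-1))) := by
    apply antitoneOn_of_deriv_nonpos (convex_Icc _ _)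
    · exact Real.continuous_mul_log.continuousOn
    · rw [interior_Icc]
      intro x hx
      exact ((Real.differentiableOn_mul_log x (by simp [ne_of_gt hx.1])).differentiableAt
        (IsOpen.mem_nhds isOpen_compl_singleton (by simp [ne_of_gt hx.1]))).differentiableWithinAt
    · rw [interior_Icc]
      intro x hx
      rw [Real.deriv_mul_log (ne_of_gt hx.1)]
      have : Real.log x ≤ Real.log (Real.exp (-1)) := Real.log_le_log hx.1 hx.2.le
      rw [Real.log_exp] at this
      linarith
  exact H ⟨ha, hab.trans hb⟩ ⟨ha.trans hab, hb⟩ hab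

lemma ent_nonpos {x : ℝ} (h0 : 0 ≤ x) (h1 : x ≤ 1) : ent x ≤ 0 := Real.mul_log_nonpos h0 h1

theorem stmt4 (n d : ℕ) (hn : 0 < n) (hd : 0 < d)
    (ε : ℝ) (hε0 : 0 < ε) (hε1 : ε ≤ 1 / 3)
    (V W : Matrix (Fin n) (Fin d) ℝ) (r c : Fin n → ℝ)
    (hr : ∀ i, 0 ≤ r i) (hc : ∀ j, 0 ≤ c j)
    (hrsum : ∑ i, r i = 1) (hcsum : ∑ j, c j = 1)
    (P P' : Matrix (Fin n) (Fin n) ℝ) (S T E S' T' E' : Matrix (Fin n) (Fin d) ℝ)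
    (q q' : ℝ)
    (hfeas : FeasQ V W r c ε P S T E q) (hfeas' : FeasQ V W r c ε P' S' T' E' q') :
    Htot P S T E q - Htot P' S' T' E' q' ≤
      2 * Real.log n + 3 * ε * Real.log ((3 * n * d + 1) / (3 * ε)) := by
  obtain ⟨hPr, hPc, hS, hT, hEq, hPpos, hSpos, hTpos, hEpos, hq⟩ := hfeas
  obtain ⟨hPr', hPc', hS', hT', hEq', hPpos', hSpos', hTpos', hEpos', hq'⟩ := hfeas'
  -- basic facts
  have hST : ∀ (i : Fin n) (k : Fin d), S i k + T i k = 2 * E i k := by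
    intro i k
    rw [hS, hT]
    simp only [Matrix.add_apply, Matrix.sub_apply]
    ring
  have hST' : ∀ (i : Fin n) (k : Fin d), S' i k + T' i k = 2 * E' i k := by
    intro i k
    rw [hS', hT']
    simp only [Matrix.add_apply, Matrix.sub_apply]
    ring
  have hEsum_nonneg : (0:ℝ) ≤ ∑ i, ∑ k, E i k :=
    Finset.sum_nonneg fun i _ => Finset.sum_nonneg fun k _ => hEpos i k
  have hEle : ∀ (i : Fin n) (k : Fin d), E i k ≤ ε := by
    intro i k
    have h1 : E i k ≤ ∑ k, E i k := Finset.single_le_sum (fun k _ => hEpos i k) (Finset.mem_univ k)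
    have h2 : ∑ k, E i k ≤ ∑ i, ∑ k, E i k :=
      Finset.single_le_sum (fun i _ => Finset.sum_nonneg fun k _ => hEpos i k) (Finset.mem_univ i)
    linarith
  -- Upper bound: Htot P S T E q ≤ 0
  have hrle : ∀ i, r i ≤ 1 := by
    intro i
    rw [← hrsum]
    exact Finset.single_le_sum (fun j _ => hr j) (Finset.mem_univ i)
  have hupper : Htot P S T E q ≤ 0 := by
    unfold Htot
    have h1 : ∑ i, ∑ j, ent (P i j) ≤ 0 := by
      apply Finset.sum_nonpos; intro i _
      apply Finset.sum_nonpos; intro j _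
      apply ent_nonpos (hPpos i j)
      have : P i j ≤ ∑ j, P i j := Finset.single_le_sum (fun j _ => hPpos i j) (Finset.mem_univ j)
      rw [hPr i] at this
      exact this.trans (hrle i)
    have h2 : ∑ i, ∑ k, (ent (S i k) + ent (T i k) + ent (E i k)) ≤ 0 := by
      apply Finset.sum_nonpos; intro i _
      apply Finset.sum_nonpos; intro k _
      have hs : ent (S i k) ≤ 0 := by
        apply ent_nonpos (hSpos i k)
        have := hST i k; have := hTpos i k; have := hEle i k; linarith
      have ht : ent (T i k) ≤ 0 := by
        apply ent_nonpos (hTpos i k)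
        have := hST i k; have := hSpos i k; have := hEle i k; linarith
      have he : ent (E i k) ≤ 0 := by
        apply ent_nonpos (hEpos i k)
        have := hEle i k; linarith
      linarith
    have h3 : ent q ≤ 0 := by
      apply ent_nonpos hq
      have : q ≤ ε := by linarith
      linarith
    linarith
  -- Lower bound on P' entropy block
  have hn0 : (0:ℝ) < (n:ℝ) := by exact_mod_cast hn
  have hP'low : -(2 * Real.log n) ≤ ∑ i, ∑ j, ent (P' i j) := by
    haveI : Nonempty (Fin n) := ⟨⟨0, hn⟩⟩
    have hJ := jensen_ent (ι := Fin n × Fin n) (fun p => P' p.1 p.2) (fun p => hPpos' p.1 p.2)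
    simp only [Fintype.sum_prod_type] at hJ
    have hsum1 : ∑ i, ∑ j, P' i j = 1 := by
      simp_rw [hPr']; exact hrsum
    rw [hsum1] at hJ
    have hcard : ((Fintype.card (Fin n × Fin n)) : ℝ) = (n:ℝ) * n := by
      simp [Fintype.card_prod]
    rw [hcard] at hJ
    have hlog : Real.log (1 / ((n:ℝ) * n)) = -(2 * Real.log n) := by
      rw [one_div, Real.log_inv, Real.log_mul (ne_of_gt hn0) (ne_of_gt hn0)]
      ring
    rw [hlog, one_mul] at hJ
    exact hJ
  -- Lower bound on the small block
  set M : ℝ := (∑ i, ∑ k, S' i k) + (∑ i, ∑ k, T' i k) + (∑ i, ∑ k, E' i k) + q' with hM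
  have hsumST' : (∑ i, ∑ k, S' i k) + (∑ i, ∑ k, T' i k) = 2 * ∑ i, ∑ k, E' i k := by
    rw [← Finset.sum_add_distrib]
    simp_rw [← Finset.sum_add_distrib, hST', ← Finset.mul_sum]
  have hMval : M = 3 * ε - 2 * q' := by rw [hM, hsumST']; linarith
  have hM0 : 0 < M := by
    have : q' ≤ ε := by
      have : (0:ℝ) ≤ ∑ i, ∑ k, E' i k :=
        Finset.sum_nonneg fun i _ => Finset.sum_nonneg fun k _ => hEpos' i k
      linarith
    rw [hMval]; linarith
  have hMle : M ≤ 3 * ε := by rw [hMval]; linarith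
  -- set up the sum type
  haveI : Nonempty ((Fin n × Fin d) ⊕ ((Fin n × Fin d) ⊕ ((Fin n × Fin d) ⊕ Unit))) :=
    ⟨Sum.inr (Sum.inr (Sum.inr ()))⟩
  set x : (Fin n × Fin d) ⊕ ((Fin n × Fin d) ⊕ ((Fin n × Fin d) ⊕ Unit)) → ℝ :=
    Sum.elim (fun p => S' p.1 p.2) (Sum.elim (fun p => T' p.1 p.2)
      (Sum.elim (fun p => E' p.1 p.2) (fun _ => q'))) with hx
  have hxn : ∀ i, 0 ≤ x i := by
    rintro (p | p | p | u)
    · exact hSpos' p.1 p.2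
    · exact hTpos' p.1 p.2
    · exact hEpos' p.1 p.2
    · exact hq'
  have hxsum : ∑ i, x i = M := by
    rw [hx, hM]
    simp [Fintype.sum_sum_type, Fintype.sum_prod_type]
    ring
  have hxent : ∑ i, ent (x i) =
      (∑ i, ∑ k, (ent (S' i k) + ent (T' i k) + ent (E' i k))) + ent q' := by
    rw [hx]
    simp [Fintype.sum_sum_type, Fintype.sum_prod_type, Finset.sum_add_distrib]
    ring
  have hcard2 : ((Fintype.card ((Fin n × Fin d) ⊕ ((Fin n × Fin d) ⊕ ((Fin n × Fin d) ⊕ Unit)))) : ℝ)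
      = 3 * (n:ℝ) * d + 1 := by
    simp [Fintype.card_sum, Fintype.card_prod]
    push_cast
    ring
  have hJ2 := jensen_ent x hxn
  rw [hxsum, hxent, hcard2] at hJ2
  set m : ℝ := 3 * (n:ℝ) * d + 1 with hmdef
  have hd0 : (1:ℝ) ≤ (d:ℝ) := by exact_mod_cast hd
  have hn1 : (1:ℝ) ≤ (n:ℝ) := by exact_mod_cast hn
  have hm4 : (4:ℝ) ≤ m := by rw [hmdef]; nlinarith
  have hm0 : (0:ℝ) < m := by linarith
  -- monotonicity step: M * log (M/m) ≥ 3ε * log (3ε/m)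
  have hexp : 3 * ε / m ≤ Real.exp (-1) := by
    have h1 : 3 * ε / m ≤ 1 / 4 := by
      rw [div_le_div_iff₀ hm0 (by norm_num)]
      linarith
    have h2 : (1:ℝ)/4 ≤ Real.exp (-1) := by
      rw [Real.exp_neg]
      have h3 : Real.exp 1 ≤ 4 := le_trans Real.exp_one_lt_d9.le (by norm_num)
      rw [one_div]
      exact inv_anti₀ (Real.exp_pos 1) h3
    linarith
  have hmono : ent (3 * ε / m) ≤ ent (M / m) :=
    ent_anti (by positivity) (by gcongr) hexp
  have hMm : M * Real.log (M / m) = m * ent (M / m) := by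
    rw [ent, ← mul_assoc, mul_comm m (M / m), div_mul_cancel₀ M (ne_of_gt hm0)]
  have hεm : 3 * ε * Real.log (3 * ε / m) = m * ent (3 * ε / m) := by
    rw [ent, ← mul_assoc, mul_comm m (3 * ε / m), div_mul_cancel₀ (3 * ε) (ne_of_gt hm0)]
  have key : 3 * ε * Real.log (3 * ε / m) ≤ M * Real.log (M / m) := by
    rw [hMm, hεm]
    exact mul_le_mul_of_nonneg_left hmono hm0.le
  have key2 : Real.log (3 * ε / m) = -Real.log (m / (3 * ε)) := by
    rw [← Real.log_inv, inv_div]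
  have key3 : 3 * ε * Real.log (3 * ε / m) = -(3 * ε * Real.log (m / (3 * ε))) := by
    rw [key2]; ring
  have hlower : -(2 * Real.log n) + 3 * ε * Real.log (3 * ε / m) ≤ Htot P' S' T' E' q' := by
    unfold Htot
    linarith [hP'low, key, hJ2]
  linarith [hupper, hlower, key3]

end
end

section
/- Let n, d be positive integers, η > 0, ε > 0, C ∈ ℝ^{n×n}, V, W ∈ ℝ^{n×d}, r, c ∈ ℝⁿ. For all x, y ∈ ℝⁿ, A, B ∈ ℝ^{n×d}, u ∈ ℝ, the infimum of the Lagrangian L(P,S,T,E,q,x,y,A,B,u) over all entrywise-nonnegative P ∈ ℝ^{n×n}, S,T,E ∈ ℝ^{n×d} and q ≥ 0 is attained and equals f(x,y,A,B,u), where f is the dual potential of the entropic martingale optimal transport problem. -/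
open Matrix

noncomputable section

/-- The dual potential of the entropic martingale optimal transport problem. -/
def dualF {n d : ℕ} (η ε : ℝ) (C : Matrix (Fin n) (Fin n) ℝ)
    (V W : Matrix (Fin n) (Fin d) ℝ) (r c : Fin n → ℝ)
    (x y : Fin n → ℝ) (A B : Matrix (Fin n) (Fin d) ℝ) (u : ℝ) : ℝ :=
  -(1 / η) * ∑ i, ∑ j,
      Real.exp (η * (-(C i j) + (∑ k, (A i k + B i k) * V j k) + x i + y j) - 1)
  + ∑ i, x i * r i + ∑ j, y j * c j
  + ∑ i, ∑ k, (A i k + B i k) * W i k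
  + ε * u - (1 / η) * Real.exp (η * u - 1)
  - (1 / η) * ∑ i, ∑ k,
      (Real.exp (η * A i k - 1) + Real.exp (-(η * B i k) - 1)
        + Real.exp (η * (u - A i k + B i k) - 1))

/-- The Lagrangian of the entropic martingale optimal transport problem. -/
def LagMOT {n d : ℕ} (η ε : ℝ) (C : Matrix (Fin n) (Fin n) ℝ)
    (V W : Matrix (Fin n) (Fin d) ℝ) (r c : Fin n → ℝ)
    (P : Matrix (Fin n) (Fin n) ℝ) (S T E : Matrix (Fin n) (Fin d) ℝ) (q : ℝ)
    (x y : Fin n → ℝ) (A B : Matrix (Fin n) (Fin d) ℝ) (u : ℝ) : ℝ :=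
  (1 / η) * Htot P S T E q + (∑ i, ∑ j, C i j * P i j)
  - ∑ i, x i * ((∑ j, P i j) - r i)
  - ∑ j, y j * ((∑ i, P i j) - c j)
  - ∑ i, ∑ k, A i k * ((P * V) i k - E i k - W i k + S i k)
  - ∑ i, ∑ k, B i k * ((P * V) i k + E i k - W i k - T i k)
  - u * ((∑ i, ∑ k, E i k) + q - ε)

/-- Minimum value of `p ↦ (1/η) ent p + α p` over `p ≥ 0`. -/
lemma phi_ge (η α p : ℝ) (hη : 0 < η) (hp : 0 ≤ p) :
    -(1/η) * Real.exp (-η*α - 1) ≤ (1/η) * ent p + α * p := by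
  rcases eq_or_lt_of_le hp with h | h
  · subst h
    simp [ent]
    positivity
  · have hlog := Real.add_one_le_exp (-η*α - 1 - Real.log p)
    have hexp : Real.exp (-η*α - 1 - Real.log p) = Real.exp (-η*α - 1) / p := by
      rw [Real.exp_sub, Real.exp_log h]
    rw [hexp] at hlog
    have h2 : (-η*α - 1 - Real.log p + 1) * p ≤ Real.exp (-η*α - 1) := by
      have := mul_le_mul_of_nonneg_right hlog (le_of_lt h)
      rwa [div_mul_cancel₀ _ (ne_of_gt h)] at this
    have hent : -Real.exp (-η*α-1) ≤ ent p + η * α * p := by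
      simp only [ent]; nlinarith
    have hmain : -((1/η) * Real.exp (-η*α-1)) ≤ (1/η) * (ent p + η*α*p) := by
      apply mul_le_mul_of_nonneg_left hent (by positivity) |>.trans_eq' ?_
      ring
    calc -(1/η) * Real.exp (-η*α - 1) = -((1/η) * Real.exp (-η*α-1)) := by ring
    _ ≤ (1/η) * (ent p + η*α*p) := hmain
    _ = (1/η) * ent p + α * p := by field_simp

/-- The minimum is attained at `p = exp(-ηα - 1)`. -/
lemma phi_at (η α : ℝ) (hη : 0 < η) :
    (1/η) * ent (Real.exp (-η*α - 1)) + α * Real.exp (-η*α - 1)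
      = -(1/η) * Real.exp (-η*α - 1) := by
  simp only [ent, Real.log_exp]
  field_simp
  ring

/-- The Lagrangian separates into independent one-dimensional problems. -/
lemma lag_expand {n d : ℕ} (η ε : ℝ) (C : Matrix (Fin n) (Fin n) ℝ)
    (V W : Matrix (Fin n) (Fin d) ℝ) (r c : Fin n → ℝ)
    (P : Matrix (Fin n) (Fin n) ℝ) (S T E : Matrix (Fin n) (Fin d) ℝ) (q : ℝ)
    (x y : Fin n → ℝ) (A B : Matrix (Fin n) (Fin d) ℝ) (u : ℝ) :
    LagMOT η ε C V W r c P S T E q x y A B u =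
      (∑ i, ∑ j, ((1/η) * ent (P i j)
          + (C i j - x i - y j - ∑ k, (A i k + B i k) * V j k) * P i j))
      + (∑ i, ∑ k, (((1/η) * ent (S i k) + (-(A i k)) * S i k)
          + ((1/η) * ent (T i k) + B i k * T i k)
          + ((1/η) * ent (E i k) + (A i k - B i k - u) * E i k)))
      + ((1/η) * ent q + (-u) * q)
      + (∑ i, x i * r i + ∑ j, y j * c j
          + ∑ i, ∑ k, (A i k + B i k) * W i k + ε * u) := by
  have hPV : ∀ (M : Matrix (Fin n) (Fin d) ℝ),
      (∑ i, ∑ k, M i k * (P * V) i k)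
        = ∑ i, ∑ j, (∑ k, M i k * V j k) * P i j := by
    intro M
    simp only [Matrix.mul_apply, Finset.mul_sum, Finset.sum_mul]
    rw [Finset.sum_congr rfl fun i _ => Finset.sum_comm]
    apply Finset.sum_congr rfl; intro i _
    apply Finset.sum_congr rfl; intro j _
    apply Finset.sum_congr rfl; intro k _
    ring
  have hy : (∑ j, y j * ∑ i, P i j) = ∑ i, ∑ j, y j * P i j := by
    rw [Finset.sum_comm]
    exact Finset.sum_congr rfl fun j _ => Finset.mul_sum ..
  simp only [LagMOT, Htot]
  simp only [mul_sub, sub_mul, add_mul, mul_add, Finset.sum_add_distrib,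
    Finset.sum_sub_distrib, Finset.mul_sum, neg_mul, Finset.sum_neg_distrib]
  have hA := hPV A
  have hB := hPV B
  simp only [Finset.mul_sum] at hA hB hy ⊢
  rw [hA, hB, hy]
  ring

/-- The dual potential written as a sum of the one-dimensional minima. -/
lemma dual_expand {n d : ℕ} (η ε : ℝ) (C : Matrix (Fin n) (Fin n) ℝ)
    (V W : Matrix (Fin n) (Fin d) ℝ) (r c : Fin n → ℝ)
    (x y : Fin n → ℝ) (A B : Matrix (Fin n) (Fin d) ℝ) (u : ℝ) :
    dualF η ε C V W r c x y A B u =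
      (∑ i, ∑ j, -(1/η) * Real.exp
          (-η * (C i j - x i - y j - ∑ k, (A i k + B i k) * V j k) - 1))
      + (∑ i, ∑ k, ((-(1/η) * Real.exp (-η * (-(A i k)) - 1))
          + (-(1/η) * Real.exp (-η * (B i k) - 1))
          + (-(1/η) * Real.exp (-η * (A i k - B i k - u) - 1))))
      + (-(1/η) * Real.exp (-η * (-u) - 1))
      + (∑ i, x i * r i + ∑ j, y j * c j
          + ∑ i, ∑ k, (A i k + B i k) * W i k + ε * u) := by
  have e1 : ∀ i j, -η * (C i j - x i - y j - ∑ k, (A i k + B i k) * V j k) - 1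
      = η * (-(C i j) + (∑ k, (A i k + B i k) * V j k) + x i + y j) - 1 := by
    intro i j; ring
  have e2 : ∀ (i : Fin n) (k : Fin d), -η * (-(A i k)) - 1 = η * A i k - 1 := by
    intro i k; ring
  have e3 : ∀ (i : Fin n) (k : Fin d), -η * (B i k) - 1 = -(η * B i k) - 1 := by
    intro i k; ring
  have e4 : ∀ (i : Fin n) (k : Fin d), -η * (A i k - B i k - u) - 1
      = η * (u - A i k + B i k) - 1 := by intro i k; ring
  have e5 : -η * (-u) - 1 = η * u - 1 := by ring
  simp only [dualF, e1, e2, e3, e4, e5]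
  simp only [Finset.mul_sum, mul_add, neg_mul, Finset.sum_add_distrib,
    Finset.sum_neg_distrib]
  ring

theorem stmt8 (n d : ℕ) (hn : 0 < n) (hd : 0 < d)
    (η ε : ℝ) (hη : 0 < η) (hε : 0 < ε)
    (C : Matrix (Fin n) (Fin n) ℝ) (V W : Matrix (Fin n) (Fin d) ℝ)
    (r c : Fin n → ℝ)
    (x y : Fin n → ℝ) (A B : Matrix (Fin n) (Fin d) ℝ) (u : ℝ) :
    IsLeast {z : ℝ | ∃ (P : Matrix (Fin n) (Fin n) ℝ)
        (S T E : Matrix (Fin n) (Fin d) ℝ) (q : ℝ),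
        (∀ i j, 0 ≤ P i j) ∧ (∀ i k, 0 ≤ S i k) ∧ (∀ i k, 0 ≤ T i k) ∧
        (∀ i k, 0 ≤ E i k) ∧ 0 ≤ q ∧
        z = LagMOT η ε C V W r c P S T E q x y A B u}
      (dualF η ε C V W r c x y A B u) := by
  constructor
  · -- membership: take the optimal point
    refine ⟨Matrix.of fun i j => Real.exp
        (-η * (C i j - x i - y j - ∑ k, (A i k + B i k) * V j k) - 1),
      Matrix.of fun i k => Real.exp (-η * (-(A i k)) - 1),
      Matrix.of fun i k => Real.exp (-η * (B i k) - 1),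
      Matrix.of fun i k => Real.exp (-η * (A i k - B i k - u) - 1),
      Real.exp (-η * (-u) - 1),
      fun i j => (Real.exp_pos _).le, fun i k => (Real.exp_pos _).le,
      fun i k => (Real.exp_pos _).le, fun i k => (Real.exp_pos _).le,
      (Real.exp_pos _).le, ?_⟩
    rw [lag_expand, dual_expand]
    simp only [Matrix.of_apply]
    congr 1
    · congr 1
      · congr 1
        · exact Finset.sum_congr rfl fun i _ => Finset.sum_congr rfl fun j _ =>
            (phi_at η _ hη).symm
        · exact Finset.sum_congr rfl fun i _ => Finset.sum_congr rfl fun k _ => by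
            rw [← phi_at η (-(A i k)) hη, ← phi_at η (B i k) hη,
              ← phi_at η (A i k - B i k - u) hη]
      · exact (phi_at η (-u) hη).symm
  · -- lower bound
    rintro z ⟨P, S, T, E, q, hP, hS, hT, hE, hq, rfl⟩
    rw [lag_expand, dual_expand]
    gcongr ?_ + ?_ + ?_ + ?_
    · exact Finset.sum_le_sum fun i _ => Finset.sum_le_sum fun j _ =>
        phi_ge η _ _ hη (hP i j)
    · refine Finset.sum_le_sum fun i _ => Finset.sum_le_sum fun k _ => ?_
      have h1 := phi_ge η (-(A i k)) (S i k) hη (hS i k)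
      have h2 := phi_ge η (B i k) (T i k) hη (hT i k)
      have h3 := phi_ge η (A i k - B i k - u) (E i k) hη (hE i k)
      linarith
    · exact phi_ge η (-u) q hη hq
    · exact le_refl _
end
end

section
/- Let n, d be positive integers, η > 0, ε > 0, C ∈ ℝ^{n×n}, V, W ∈ ℝ^{n×d}, r, c ∈ ℝⁿ. Suppose the feasible set Q of the entropic martingale optimal transport problem contains a point (P,S,T,E,q) with all entries of P, S, T, E strictly positive and q > 0. Then strong duality holds: inf_{(P,S,T,E,q)∈Q} [C·P + (1/η)H(P,S,T,E,q)] = sup_{(x,y,A,B,u) ∈ ℝⁿ×ℝⁿ×ℝ^{n×d}×ℝ^{n×d}×ℝ} f(x,y,A,B,u). -/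
open Matrix

noncomputable section

namespace EMOT

def pObj {n d : ℕ} (η : ℝ) (C : Matrix (Fin n) (Fin n) ℝ) (P : Matrix (Fin n) (Fin n) ℝ)
    (S T E : Matrix (Fin n) (Fin d) ℝ) (q : ℝ) : ℝ :=
  (∑ i, ∑ j, C i j * P i j) + (1 / η) * Htot P S T E q

def Phi (η t v : ℝ) : ℝ := (1/η) * ent v - t * v + (1/η) * Real.exp (η*t - 1)

lemma Phi_nonneg {η : ℝ} (hη : 0 < η) (t : ℝ) {v : ℝ} (hv : 0 ≤ v) : 0 ≤ Phi η t v := by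
  rcases eq_or_lt_of_le hv with h | h
  · simp [Phi, ← h, ent]
    positivity
  · have key : v * ((η*t - 1 - Real.log v) + 1) ≤ v * Real.exp (η*t - 1 - Real.log v) :=
      mul_le_mul_of_nonneg_left (Real.add_one_le_exp _) (le_of_lt h)
    have hv' : v * Real.exp (η*t - 1 - Real.log v) = Real.exp (η*t - 1) := by
      rw [Real.exp_sub, Real.exp_log h]
      field_simp
    rw [hv'] at key
    have h1η : 0 < 1/η := by positivity
    have h2 : 0 ≤ η * Phi η t v := by
      have : η * Phi η t v = v * Real.log v - η * t * v + Real.exp (η*t-1) := by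
        unfold Phi ent; field_simp
      rw [this]; nlinarith [key]
    have := le_of_mul_le_mul_left (by linarith : η * 0 ≤ η * Phi η t v) hη
    linarith

lemma Phi_zero {η : ℝ} (hη : 0 < η) (t v : ℝ) (hv : v = Real.exp (η*t - 1)) :
    Phi η t v = 0 := by
  subst hv
  unfold Phi ent
  rw [Real.log_exp]
  field_simp
  ring

-- double sum helpers
lemma dsum_add {m k : ℕ} (f g : Fin m → Fin k → ℝ) :
    (∑ i, ∑ j, (f i j + g i j)) = (∑ i, ∑ j, f i j) + (∑ i, ∑ j, g i j) := by
  simp [Finset.sum_add_distrib]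

lemma dsum_sub {m k : ℕ} (f g : Fin m → Fin k → ℝ) :
    (∑ i, ∑ j, (f i j - g i j)) = (∑ i, ∑ j, f i j) - (∑ i, ∑ j, g i j) := by
  simp [Finset.sum_sub_distrib]

lemma dsum_mul {m k : ℕ} (a : ℝ) (f : Fin m → Fin k → ℝ) :
    (∑ i, ∑ j, a * f i j) = a * (∑ i, ∑ j, f i j) := by
  simp [Finset.mul_sum]

lemma dsum_phi {m k : ℕ} (η : ℝ) (t v : Fin m → Fin k → ℝ) :
    (∑ i, ∑ j, Phi η (t i j) (v i j)) =
    (1/η) * (∑ i, ∑ j, ent (v i j)) - (∑ i, ∑ j, t i j * v i j)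
    + (1/η) * (∑ i, ∑ j, Real.exp (η * t i j - 1)) := by
  simp only [Phi]
  rw [dsum_add, dsum_sub, dsum_mul, dsum_mul]

lemma gap {n d : ℕ} {η ε : ℝ} (C : Matrix (Fin n) (Fin n) ℝ)
    (V W : Matrix (Fin n) (Fin d) ℝ) (r c : Fin n → ℝ)
    (P : Matrix (Fin n) (Fin n) ℝ) (S T E : Matrix (Fin n) (Fin d) ℝ) (q : ℝ)
    (h1 : ∀ i, ∑ j, P i j = r i) (h2 : ∀ j, ∑ i, P i j = c j)
    (hS : S = W - P * V + E) (hT : T = P * V - W + E)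
    (hq : (∑ i, ∑ k, E i k) + q = ε)
    (x y : Fin n → ℝ) (A B : Matrix (Fin n) (Fin d) ℝ) (u : ℝ) :
    pObj η C P S T E q - dualF η ε C V W r c x y A B u =
      (∑ i, ∑ j, Phi η (-(C i j) + (∑ k, (A i k + B i k) * V j k) + x i + y j) (P i j))
      + (∑ i, ∑ k, (Phi η (A i k) (S i k) + Phi η (-(B i k)) (T i k)
          + Phi η (u - A i k + B i k) (E i k)))
      + Phi η u q := by
  have hSe : ∀ i k, S i k = W i k - (∑ j, P i j * V j k) + E i k := by
    intro i k; rw [hS]; simp [Matrix.sub_apply, Matrix.add_apply, Matrix.mul_apply]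
  have hTe : ∀ i k, T i k = (∑ j, P i j * V j k) - W i k + E i k := by
    intro i k; rw [hT]; simp [Matrix.sub_apply, Matrix.add_apply, Matrix.mul_apply]
  -- block rewrites
  have hblk2 : (∑ i, ∑ k, (Phi η (A i k) (S i k) + Phi η (-(B i k)) (T i k)
      + Phi η (u - A i k + B i k) (E i k))) =
      (∑ i, ∑ k, Phi η (A i k) (S i k)) + (∑ i, ∑ k, Phi η (-(B i k)) (T i k))
      + (∑ i, ∑ k, Phi η (u - A i k + B i k) (E i k)) := by
    rw [dsum_add, dsum_add]
  -- linear sum computations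
  have exr : (∑ i, ∑ j, x i * P i j) = ∑ i, x i * r i := by
    simp [← Finset.mul_sum, h1]
  have eyc : (∑ i, ∑ j, y j * P i j) = ∑ j, y j * c j := by
    rw [Finset.sum_comm]; simp [← Finset.mul_sum, h2]
  have eKP : ∀ (G : Matrix (Fin n) (Fin d) ℝ),
      (∑ i, ∑ j, (∑ k, G i k * V j k) * P i j) = ∑ i, ∑ k, G i k * ∑ j, P i j * V j k := by
    intro G
    refine Finset.sum_congr rfl fun i _ => ?_
    simp only [Finset.sum_mul, Finset.mul_sum]
    rw [Finset.sum_comm]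
    exact Finset.sum_congr rfl fun k _ => Finset.sum_congr rfl fun j _ => by ring
  have e1 : (∑ i, ∑ j, (-(C i j) + (∑ k, (A i k + B i k) * V j k) + x i + y j) * P i j)
      = -(∑ i, ∑ j, C i j * P i j)
        + ((∑ i, ∑ k, A i k * ∑ j, P i j * V j k) + (∑ i, ∑ k, B i k * ∑ j, P i j * V j k))
        + (∑ i, x i * r i) + (∑ j, y j * c j) := by
    have expand : ∀ i j, (-(C i j) + (∑ k, (A i k + B i k) * V j k) + x i + y j) * P i j
        = (((-(C i j * P i j)) + ((∑ k, (A i k + B i k) * V j k) * P i j)) + x i * P i j)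
          + y j * P i j := by intro i j; ring
    rw [Finset.sum_congr rfl fun i _ => Finset.sum_congr rfl fun j _ => expand i j]
    rw [dsum_add, dsum_add, dsum_add, exr, eyc]
    have : (∑ i, ∑ j, -(C i j * P i j)) = -(∑ i, ∑ j, C i j * P i j) := by simp
    rw [this, eKP (fun i k => A i k + B i k)]
    have h4 : (∑ i, ∑ k, (A i k + B i k) * ∑ j, P i j * V j k)
        = (∑ i, ∑ k, (A i k * ∑ j, P i j * V j k + B i k * ∑ j, P i j * V j k)) := by
      refine Finset.sum_congr rfl fun i _ => Finset.sum_congr rfl fun k _ => by ring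
    rw [h4, dsum_add]
  have eS : (∑ i, ∑ k, A i k * S i k)
      = (∑ i, ∑ k, A i k * W i k) - (∑ i, ∑ k, A i k * ∑ j, P i j * V j k)
        + (∑ i, ∑ k, A i k * E i k) := by
    rw [← dsum_sub, ← dsum_add]
    refine Finset.sum_congr rfl fun i _ => Finset.sum_congr rfl fun k _ => ?_
    rw [hSe i k]; ring
  have eT : (∑ i, ∑ k, -B i k * T i k)
      = (∑ i, ∑ k, B i k * W i k) - (∑ i, ∑ k, B i k * ∑ j, P i j * V j k)
        - (∑ i, ∑ k, B i k * E i k) := by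
    rw [← dsum_sub, ← dsum_sub]
    refine Finset.sum_congr rfl fun i _ => Finset.sum_congr rfl fun k _ => ?_
    rw [hTe i k]; ring
  have eE : (∑ i, ∑ k, (u - A i k + B i k) * E i k)
      = u * (∑ i, ∑ k, E i k) - (∑ i, ∑ k, A i k * E i k)
        + (∑ i, ∑ k, B i k * E i k) := by
    rw [← dsum_mul u E, ← dsum_sub (fun i k => u * E i k) (fun i k => A i k * E i k),
      ← dsum_add (fun i k => u * E i k - A i k * E i k) (fun i k => B i k * E i k)]
    refine Finset.sum_congr rfl fun i _ => Finset.sum_congr rfl fun k _ => by ring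
  have eW : (∑ i, ∑ k, (A i k + B i k) * W i k)
      = (∑ i, ∑ k, A i k * W i k) + (∑ i, ∑ k, B i k * W i k) := by
    rw [← dsum_add]
    exact Finset.sum_congr rfl fun i _ => Finset.sum_congr rfl fun k _ => by ring
  have eX2 : (∑ i, ∑ k, (Real.exp (η * A i k - 1) + Real.exp (-(η * B i k) - 1)
        + Real.exp (η * (u - A i k + B i k) - 1)))
      = (∑ i, ∑ k, Real.exp (η * A i k - 1)) + (∑ i, ∑ k, Real.exp (η * -B i k - 1))
        + (∑ i, ∑ k, Real.exp (η * (u - A i k + B i k) - 1)) := by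
    rw [← dsum_add, ← dsum_add]
    refine Finset.sum_congr rfl fun i _ => Finset.sum_congr rfl fun k _ => by
      simp [mul_neg]
  rw [hblk2, dsum_phi η (fun i j => -(C i j) + (∑ k, (A i k + B i k) * V j k) + x i + y j)
      (fun i j => P i j),
    dsum_phi η (fun i k => A i k) (fun i k => S i k),
    dsum_phi η (fun i k => -(B i k)) (fun i k => T i k),
    dsum_phi η (fun i k => u - A i k + B i k) (fun i k => E i k)]
  have eH : (∑ i, ∑ k, (ent (S i k) + ent (T i k) + ent (E i k)))
      = (∑ i, ∑ k, ent (S i k)) + (∑ i, ∑ k, ent (T i k)) + (∑ i, ∑ k, ent (E i k)) := by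
    rw [dsum_add, dsum_add]
  simp only [pObj, dualF, Htot, Phi]
  rw [e1, eS, eT, eE, eX2, eW, eH]
  linear_combination (u : ℝ) * hq
abbrev Z (n d : ℕ) := Matrix (Fin n) (Fin n) ℝ × Matrix (Fin n) (Fin d) ℝ ×
  Matrix (Fin n) (Fin d) ℝ × Matrix (Fin n) (Fin d) ℝ × ℝ

def KS {n d : ℕ} (V W : Matrix (Fin n) (Fin d) ℝ) (r c : Fin n → ℝ) (ε : ℝ) : Set (Z n d) :=
  {z | FeasQ V W r c ε z.1 z.2.1 z.2.2.1 z.2.2.2.1 z.2.2.2.2}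

def φob {n d : ℕ} (η : ℝ) (C : Matrix (Fin n) (Fin n) ℝ) : Z n d → ℝ :=
  fun z => pObj η C z.1 z.2.1 z.2.2.1 z.2.2.2.1 z.2.2.2.2

@[fun_prop]
lemma cont_ent : Continuous ent := Real.continuous_mul_log

lemma cont_φob {n d : ℕ} (η : ℝ) (C : Matrix (Fin n) (Fin n) ℝ) :
    Continuous (φob (n := n) (d := d) η C) := by
  unfold φob pObj Htot
  fun_prop

lemma closed_KS {n d : ℕ} (V W : Matrix (Fin n) (Fin d) ℝ) (r c : Fin n → ℝ) (ε : ℝ) :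
    IsClosed (KS V W r c ε) := by
  have hrw : KS V W r c ε =
      (⋂ i, {z : Z n d | ∑ j, z.1 i j = r i}) ∩
      (⋂ j, {z : Z n d | ∑ i, z.1 i j = c j}) ∩
      (⋂ i, ⋂ k, {z : Z n d | z.2.1 i k = W i k - (∑ j, z.1 i j * V j k) + z.2.2.2.1 i k}) ∩
      (⋂ i, ⋂ k, {z : Z n d | z.2.2.1 i k = (∑ j, z.1 i j * V j k) - W i k + z.2.2.2.1 i k}) ∩
      {z : Z n d | (∑ i, ∑ k, z.2.2.2.1 i k) + z.2.2.2.2 = ε} ∩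
      (⋂ i, ⋂ j, {z : Z n d | 0 ≤ z.1 i j}) ∩
      (⋂ i, ⋂ k, {z : Z n d | 0 ≤ z.2.1 i k}) ∩
      (⋂ i, ⋂ k, {z : Z n d | 0 ≤ z.2.2.1 i k}) ∩
      (⋂ i, ⋂ k, {z : Z n d | 0 ≤ z.2.2.2.1 i k}) ∩
      {z : Z n d | 0 ≤ z.2.2.2.2} := by
    ext z
    simp only [KS, FeasQ, Set.mem_setOf_eq, Set.mem_inter_iff, Set.mem_iInter]
    constructor
    · rintro ⟨a1, a2, a3, a4, a5, a6, a7, a8, a9, a10⟩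
      refine ⟨⟨⟨⟨⟨⟨⟨⟨⟨a1, a2⟩, ?_⟩, ?_⟩, a5⟩, a6⟩, a7⟩, a8⟩, a9⟩, a10⟩
      · intro i k; rw [a3]; simp [Matrix.sub_apply, Matrix.add_apply, Matrix.mul_apply]
      · intro i k; rw [a4]; simp [Matrix.sub_apply, Matrix.add_apply, Matrix.mul_apply]
    · rintro ⟨⟨⟨⟨⟨⟨⟨⟨⟨a1, a2⟩, a3⟩, a4⟩, a5⟩, a6⟩, a7⟩, a8⟩, a9⟩, a10⟩
      refine ⟨a1, a2, ?_, ?_, a5, a6, a7, a8, a9, a10⟩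
      · ext i k
        simp only [Matrix.sub_apply, Matrix.add_apply, Matrix.mul_apply]
        exact a3 i k
      · ext i k
        simp only [Matrix.sub_apply, Matrix.add_apply, Matrix.mul_apply]
        exact a4 i k
  rw [hrw]
  have c1 : Continuous fun z : Z n d => z.2.2.2.2 := by fun_prop
  refine ((((((((IsClosed.inter ?_ ?_).inter ?_).inter ?_).inter ?_).inter ?_).inter ?_).inter ?_).inter ?_).inter ?_
  · exact isClosed_iInter fun i => isClosed_eq (by fun_prop) continuous_const
  · exact isClosed_iInter fun j => isClosed_eq (by fun_prop) continuous_const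
  · exact isClosed_iInter fun i => isClosed_iInter fun k => isClosed_eq (by fun_prop) (by fun_prop)
  · exact isClosed_iInter fun i => isClosed_iInter fun k => isClosed_eq (by fun_prop) (by fun_prop)
  · exact isClosed_eq (by fun_prop) continuous_const
  · exact isClosed_iInter fun i => isClosed_iInter fun j => isClosed_le continuous_const (by fun_prop)
  · exact isClosed_iInter fun i => isClosed_iInter fun k => isClosed_le continuous_const (by fun_prop)
  · exact isClosed_iInter fun i => isClosed_iInter fun k => isClosed_le continuous_const (by fun_prop)
  · exact isClosed_iInter fun i => isClosed_iInter fun k => isClosed_le continuous_const (by fun_prop)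
  · exact isClosed_le continuous_const c1


lemma exists_min {n d : ℕ} (η : ℝ) (C : Matrix (Fin n) (Fin n) ℝ)
    (V W : Matrix (Fin n) (Fin d) ℝ) (r c : Fin n → ℝ) (ε : ℝ)
    (hne : (KS V W r c ε).Nonempty) :
    ∃ z ∈ KS V W r c ε, IsMinOn (φob η C) (KS V W r c ε) z := by
  set Rp := ∑ i, r i with hRp
  set MW := ∑ i, ∑ k, |W i k| with hMW
  set MV := ∑ j, ∑ k, |V j k| with hMV
  set MS := MW + Rp * MV + ε with hMS
  have hbox : IsCompact
      ((Set.univ.pi fun _ : Fin n => Set.univ.pi fun _ : Fin n => Set.Icc (0:ℝ) Rp) ×ˢ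
       ((Set.univ.pi fun _ : Fin n => Set.univ.pi fun _ : Fin d => Set.Icc (-MS) MS) ×ˢ
        ((Set.univ.pi fun _ : Fin n => Set.univ.pi fun _ : Fin d => Set.Icc (-MS) MS) ×ˢ
         ((Set.univ.pi fun _ : Fin n => Set.univ.pi fun _ : Fin d => Set.Icc (0:ℝ) ε) ×ˢ
          Set.Icc (0:ℝ) ε)))) := by
    refine IsCompact.prod ?_ (IsCompact.prod ?_ (IsCompact.prod ?_ (IsCompact.prod ?_ isCompact_Icc))) <;>
      exact isCompact_univ_pi fun _ => isCompact_univ_pi fun _ => isCompact_Icc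
  have hsub : KS V W r c ε ⊆
      ((Set.univ.pi fun _ : Fin n => Set.univ.pi fun _ : Fin n => Set.Icc (0:ℝ) Rp) ×ˢ
       ((Set.univ.pi fun _ : Fin n => Set.univ.pi fun _ : Fin d => Set.Icc (-MS) MS) ×ˢ
        ((Set.univ.pi fun _ : Fin n => Set.univ.pi fun _ : Fin d => Set.Icc (-MS) MS) ×ˢ
         ((Set.univ.pi fun _ : Fin n => Set.univ.pi fun _ : Fin d => Set.Icc (0:ℝ) ε) ×ˢ
          Set.Icc (0:ℝ) ε)))) := fun z hz => by
    obtain ⟨a1, a2, a3, a4, a5, a6, a7, a8, a9, a10⟩ := hz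
    have hr0 : ∀ i, 0 ≤ r i := by
      intro i; rw [← a1 i]; exact Finset.sum_nonneg fun j _ => a6 i j
    have hRp0 : 0 ≤ Rp := by
      rw [hRp]; exact Finset.sum_nonneg fun i _ => hr0 i
    have hrRp : ∀ i, r i ≤ Rp := by
      intro i; rw [hRp]
      exact Finset.single_le_sum (fun i _ => hr0 i) (Finset.mem_univ i)
    have hPb : ∀ i j, z.1 i j ≤ Rp := by
      intro i j
      calc z.1 i j ≤ ∑ j', z.1 i j' :=
            Finset.single_le_sum (fun j' _ => a6 i j') (Finset.mem_univ j)
        _ = r i := a1 i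
        _ ≤ Rp := hrRp i
    have hEb : ∀ i k, z.2.2.2.1 i k ≤ ε := by
      intro i k
      calc z.2.2.2.1 i k ≤ ∑ k', z.2.2.2.1 i k' :=
            Finset.single_le_sum (fun k' _ => a9 i k') (Finset.mem_univ k)
        _ ≤ ∑ i', ∑ k', z.2.2.2.1 i' k' :=
            Finset.single_le_sum (fun i' _ => Finset.sum_nonneg fun k' _ => a9 i' k')
              (Finset.mem_univ i)
        _ = ε - z.2.2.2.2 := by linarith [a5]
        _ ≤ ε := by linarith [a10]
    have hq : z.2.2.2.2 ≤ ε := by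
      have : 0 ≤ ∑ i', ∑ k', z.2.2.2.1 i' k' :=
        Finset.sum_nonneg fun i' _ => Finset.sum_nonneg fun k' _ => a9 i' k'
      linarith [a5]
    have hWb : ∀ i k, |W i k| ≤ MW := by
      intro i k
      calc |W i k| ≤ ∑ k', |W i k'| :=
            Finset.single_le_sum (f := fun k' => |W i k'|)
              (fun k' _ => abs_nonneg _) (Finset.mem_univ k)
        _ ≤ MW := by
            rw [hMW]
            exact Finset.single_le_sum (f := fun i' => ∑ k', |W i' k'|)
              (fun i' _ => Finset.sum_nonneg fun k' _ => abs_nonneg _) (Finset.mem_univ i)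
    have hPVb : ∀ i k, |∑ j, z.1 i j * V j k| ≤ Rp * MV := by
      intro i k
      calc |∑ j, z.1 i j * V j k| ≤ ∑ j, |z.1 i j * V j k| := Finset.abs_sum_le_sum_abs _ _
        _ ≤ ∑ j, Rp * |V j k| := by
            refine Finset.sum_le_sum fun j _ => ?_
            rw [abs_mul, abs_of_nonneg (a6 i j)]
            exact mul_le_mul_of_nonneg_right (hPb i j) (abs_nonneg _)
        _ = Rp * ∑ j, |V j k| := by rw [Finset.mul_sum]
        _ ≤ Rp * MV := by
            refine mul_le_mul_of_nonneg_left ?_ hRp0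
            rw [hMV]
            refine Finset.sum_le_sum fun j _ => ?_
            exact Finset.single_le_sum (f := fun k' => |V j k'|)
              (fun k' _ => abs_nonneg _) (Finset.mem_univ k)
    have hSb : ∀ i k, |z.2.1 i k| ≤ MS := by
      intro i k
      have h3 : z.2.1 i k = W i k - (∑ j, z.1 i j * V j k) + z.2.2.2.1 i k := by
        rw [a3]; simp [Matrix.sub_apply, Matrix.add_apply, Matrix.mul_apply]
      have h1 := abs_le.mp (hWb i k)
      have h2 := abs_le.mp (hPVb i k)
      rw [abs_le, hMS]
      constructor <;> [skip; skip] <;> rw [h3] <;>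
        first
        | (have := a9 i k; nlinarith [hEb i k])
        | nlinarith [hEb i k, a9 i k]
    have hTb : ∀ i k, |z.2.2.1 i k| ≤ MS := by
      intro i k
      have h3 : z.2.2.1 i k = (∑ j, z.1 i j * V j k) - W i k + z.2.2.2.1 i k := by
        rw [a4]; simp [Matrix.sub_apply, Matrix.add_apply, Matrix.mul_apply]
      have h1 := abs_le.mp (hWb i k)
      have h2 := abs_le.mp (hPVb i k)
      rw [abs_le, hMS]
      constructor <;> rw [h3] <;> nlinarith [hEb i k, a9 i k]
    refine ⟨?_, ?_, ?_, ?_, ?_⟩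
    · intro i _; intro j _; exact ⟨a6 i j, hPb i j⟩
    · intro i _; intro k _; exact abs_le.mp (hSb i k)
    · intro i _; intro k _; exact abs_le.mp (hTb i k)
    · intro i _; intro k _; exact ⟨a9 i k, hEb i k⟩
    · exact ⟨a10, hq⟩
  have hcomp : IsCompact (KS V W r c ε) :=
    hbox.of_isClosed_subset (closed_KS V W r c ε) hsub
  exact hcomp.exists_isMinOn hne (cont_φob η C).continuousOn

def Fc (θ a b : ℝ) : ℝ := ent ((1-θ)*a + θ*b) - ((1-θ) * ent a + θ * ent b)

lemma Fc_nonpos {θ a b : ℝ} (ha : 0 ≤ a) (hb : 0 ≤ b) (h0 : 0 ≤ θ) (h1 : θ ≤ 1) :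
    Fc θ a b ≤ 0 := by
  have := Real.convexOn_mul_log.2 (Set.mem_Ici.mpr ha) (Set.mem_Ici.mpr hb)
    (by linarith : (0:ℝ) ≤ 1 - θ) h0 (by ring)
  simp only [smul_eq_mul] at this
  unfold Fc ent
  linarith

lemma Fc_zero {θ b : ℝ} (hb : 0 < b) (h0 : 0 < θ) :
    Fc θ 0 b = θ * b * Real.log θ := by
  unfold Fc ent
  rw [mul_zero, zero_add, zero_mul, mul_zero, Real.log_mul (ne_of_gt h0) (ne_of_gt hb)]
  ring

lemma contra_core {η φ0 φs b : ℝ} (hη : 0 < η) (hb : 0 < b)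
    (h : ∀ θ : ℝ, 0 < θ → θ < 1 → 0 ≤ θ*(φs - φ0) + (1/η)*(θ * b * Real.log θ)) :
    False := by
  set θ := min (1/2 : ℝ) (Real.exp (-η*(φs - φ0)/b - 1)) with hθdef
  have hθ0 : 0 < θ := lt_min (by norm_num) (Real.exp_pos _)
  have hθ1 : θ < 1 := lt_of_le_of_lt (min_le_left _ _) (by norm_num)
  have hlog : Real.log θ ≤ -η*(φs - φ0)/b - 1 := by
    calc Real.log θ ≤ Real.log (Real.exp (-η*(φs - φ0)/b - 1)) :=
          Real.log_le_log hθ0 (min_le_right _ _)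
      _ = -η*(φs - φ0)/b - 1 := Real.log_exp _
  have h2 := h θ hθ0 hθ1
  have h3 : θ * b * Real.log θ ≤ θ * b * (-η*(φs - φ0)/b - 1) :=
    mul_le_mul_of_nonneg_left hlog (by positivity)
  have h4 : (1/η) * (θ * b * Real.log θ) ≤ (1/η) * (θ * b * (-η*(φs - φ0)/b - 1)) :=
    mul_le_mul_of_nonneg_left h3 (by positivity)
  have h5 : (1/η) * (θ * b * (-η*(φs - φ0)/b - 1)) = -(θ*(φs - φ0)) - θ*b/η := by
    field_simp
  have h6 : 0 < θ*b/η := by positivity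
  linarith

lemma seg {n d : ℕ} {η ε : ℝ} (C : Matrix (Fin n) (Fin n) ℝ)
    (V W : Matrix (Fin n) (Fin d) ℝ) (r c : Fin n → ℝ)
    {z0 zs : Z n d} (h0 : z0 ∈ KS V W r c ε) (hs : zs ∈ KS V W r c ε)
    {θ : ℝ} (hθ0 : 0 ≤ θ) (hθ1 : θ ≤ 1) :
    ∃ zθ ∈ KS V W r c ε, φob η C zθ = (1-θ) * φob η C z0 + θ * φob η C zs
      + (1/η) * ((∑ i, ∑ j, Fc θ (z0.1 i j) (zs.1 i j))
        + (∑ i, ∑ k, (Fc θ (z0.2.1 i k) (zs.2.1 i k) + Fc θ (z0.2.2.1 i k) (zs.2.2.1 i k)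
            + Fc θ (z0.2.2.2.1 i k) (zs.2.2.2.1 i k)))
        + Fc θ z0.2.2.2.2 zs.2.2.2.2) := by
  obtain ⟨a1, a2, a3, a4, a5, a6, a7, a8, a9, a10⟩ := h0
  obtain ⟨b1, b2, b3, b4, b5, b6, b7, b8, b9, b10⟩ := hs
  have hS0e : ∀ i k, z0.2.1 i k = W i k - (∑ j, z0.1 i j * V j k) + z0.2.2.2.1 i k := by
    intro i k; rw [a3]; simp [Matrix.sub_apply, Matrix.add_apply, Matrix.mul_apply]
  have hT0e : ∀ i k, z0.2.2.1 i k = (∑ j, z0.1 i j * V j k) - W i k + z0.2.2.2.1 i k := by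
    intro i k; rw [a4]; simp [Matrix.sub_apply, Matrix.add_apply, Matrix.mul_apply]
  have hSse : ∀ i k, zs.2.1 i k = W i k - (∑ j, zs.1 i j * V j k) + zs.2.2.2.1 i k := by
    intro i k; rw [b3]; simp [Matrix.sub_apply, Matrix.add_apply, Matrix.mul_apply]
  have hTse : ∀ i k, zs.2.2.1 i k = (∑ j, zs.1 i j * V j k) - W i k + zs.2.2.2.1 i k := by
    intro i k; rw [b4]; simp [Matrix.sub_apply, Matrix.add_apply, Matrix.mul_apply]
  have key : ∀ (i : Fin n) (k : Fin d),
      (∑ j, ((1-θ)*z0.1 i j + θ*zs.1 i j) * V j k)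
        = (1-θ) * (∑ j, z0.1 i j * V j k) + θ * (∑ j, zs.1 i j * V j k) := by
    intro i k
    rw [Finset.mul_sum, Finset.mul_sum, ← Finset.sum_add_distrib]
    exact Finset.sum_congr rfl fun j _ => by ring
  refine ⟨(fun i j => (1-θ)*z0.1 i j + θ*zs.1 i j,
    fun i k => (1-θ)*z0.2.1 i k + θ*zs.2.1 i k,
    fun i k => (1-θ)*z0.2.2.1 i k + θ*zs.2.2.1 i k,
    fun i k => (1-θ)*z0.2.2.2.1 i k + θ*zs.2.2.2.1 i k,
    (1-θ)*z0.2.2.2.2 + θ*zs.2.2.2.2), ⟨?_, ?_, ?_, ?_, ?_, ?_, ?_, ?_, ?_, ?_⟩, ?_⟩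
  all_goals try dsimp only
  · intro i
    rw [Finset.sum_add_distrib, ← Finset.mul_sum, ← Finset.mul_sum, a1 i, b1 i]; ring
  · intro j
    rw [Finset.sum_add_distrib, ← Finset.mul_sum, ← Finset.mul_sum, a2 j, b2 j]; ring
  · ext i k
    show (1-θ)*z0.2.1 i k + θ*zs.2.1 i k = W i k - (∑ j, ((1-θ)*z0.1 i j + θ*zs.1 i j) * V j k)
      + ((1-θ)*z0.2.2.2.1 i k + θ*zs.2.2.2.1 i k)
    rw [key i k]
    rw [hS0e i k, hSse i k]; ring
  · ext i k
    show (1-θ)*z0.2.2.1 i k + θ*zs.2.2.1 i k = (∑ j, ((1-θ)*z0.1 i j + θ*zs.1 i j) * V j k) - W i k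
      + ((1-θ)*z0.2.2.2.1 i k + θ*zs.2.2.2.1 i k)
    rw [key i k]
    rw [hT0e i k, hTse i k]; ring
  · have e0 : (∑ i, ∑ k, ((1-θ)*z0.2.2.2.1 i k + θ*zs.2.2.2.1 i k))
        = (1-θ) * (∑ i, ∑ k, z0.2.2.2.1 i k) + θ * (∑ i, ∑ k, zs.2.2.2.1 i k) := by
      rw [← dsum_mul (1-θ) z0.2.2.2.1, ← dsum_mul θ zs.2.2.2.1,
        ← dsum_add (fun i k => (1-θ)*z0.2.2.2.1 i k) (fun i k => θ*zs.2.2.2.1 i k)]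
    rw [e0]
    nlinarith [a5, b5]
  · intro i j; have := a6 i j; have := b6 i j; nlinarith
  · intro i k; have := a7 i k; have := b7 i k; nlinarith
  · intro i k; have := a8 i k; have := b8 i k; nlinarith
  · intro i k; have := a9 i k; have := b9 i k; nlinarith
  · nlinarith [a10, b10]
  · simp only [φob, pObj, Htot]
    have hlin : (∑ i, ∑ j, C i j * ((1-θ)*z0.1 i j + θ*zs.1 i j))
        = (1-θ)*(∑ i, ∑ j, C i j * z0.1 i j) + θ*(∑ i, ∑ j, C i j * zs.1 i j) := by
      rw [← dsum_mul, ← dsum_mul, ← dsum_add]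
      exact Finset.sum_congr rfl fun i _ => Finset.sum_congr rfl fun j _ => by ring
    have hentP : (∑ i, ∑ j, ent ((1-θ)*z0.1 i j + θ*zs.1 i j))
        = (∑ i, ∑ j, Fc θ (z0.1 i j) (zs.1 i j))
          + ((1-θ)*(∑ i, ∑ j, ent (z0.1 i j)) + θ*(∑ i, ∑ j, ent (zs.1 i j))) := by
      rw [← dsum_mul, ← dsum_mul, ← dsum_add, ← dsum_add]
      refine Finset.sum_congr rfl fun i _ => Finset.sum_congr rfl fun j _ => ?_
      unfold Fc; ring
    have hentSTE : (∑ i, ∑ k, (ent ((1-θ)*z0.2.1 i k + θ*zs.2.1 i k)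
          + ent ((1-θ)*z0.2.2.1 i k + θ*zs.2.2.1 i k)
          + ent ((1-θ)*z0.2.2.2.1 i k + θ*zs.2.2.2.1 i k)))
        = (∑ i, ∑ k, (Fc θ (z0.2.1 i k) (zs.2.1 i k) + Fc θ (z0.2.2.1 i k) (zs.2.2.1 i k)
            + Fc θ (z0.2.2.2.1 i k) (zs.2.2.2.1 i k)))
          + ((1-θ)*(∑ i, ∑ k, (ent (z0.2.1 i k) + ent (z0.2.2.1 i k) + ent (z0.2.2.2.1 i k)))
            + θ*(∑ i, ∑ k, (ent (zs.2.1 i k) + ent (zs.2.2.1 i k) + ent (zs.2.2.2.1 i k)))) := by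
      rw [← dsum_mul, ← dsum_mul, ← dsum_add, ← dsum_add]
      refine Finset.sum_congr rfl fun i _ => Finset.sum_congr rfl fun k _ => ?_
      unfold Fc; ring
    have hq : ent ((1-θ)*z0.2.2.2.2 + θ*zs.2.2.2.2)
        = Fc θ z0.2.2.2.2 zs.2.2.2.2 + ((1-θ)*ent z0.2.2.2.2 + θ*ent zs.2.2.2.2) := by
      unfold Fc; ring
    rw [hlin, hentP, hentSTE, hq]
    ring

lemma min_pos {n d : ℕ} {η ε : ℝ} (hη : 0 < η) (C : Matrix (Fin n) (Fin n) ℝ)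
    (V W : Matrix (Fin n) (Fin d) ℝ) (r c : Fin n → ℝ)
    {zs z0 : Z n d} (hzs : zs ∈ KS V W r c ε)
    (hp1 : ∀ i j, 0 < zs.1 i j) (hp2 : ∀ i k, 0 < zs.2.1 i k)
    (hp3 : ∀ i k, 0 < zs.2.2.1 i k) (hp4 : ∀ i k, 0 < zs.2.2.2.1 i k)
    (hp5 : 0 < zs.2.2.2.2)
    (hz0 : z0 ∈ KS V W r c ε) (hmin : IsMinOn (φob η C) (KS V W r c ε) z0) :
    (∀ i j, 0 < z0.1 i j) ∧ (∀ i k, 0 < z0.2.1 i k) ∧ (∀ i k, 0 < z0.2.2.1 i k) ∧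
      (∀ i k, 0 < z0.2.2.2.1 i k) ∧ 0 < z0.2.2.2.2 := by
  have h0' := hz0
  obtain ⟨a1, a2, a3, a4, a5, a6, a7, a8, a9, a10⟩ := h0'
  have finish : ∀ (b : ℝ), 0 < b →
      (∀ θ : ℝ, 0 < θ → θ < 1 →
        (∑ i, ∑ j, Fc θ (z0.1 i j) (zs.1 i j))
        + (∑ i, ∑ k, (Fc θ (z0.2.1 i k) (zs.2.1 i k) + Fc θ (z0.2.2.1 i k) (zs.2.2.1 i k)
            + Fc θ (z0.2.2.2.1 i k) (zs.2.2.2.1 i k)))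
        + Fc θ z0.2.2.2.2 zs.2.2.2.2 ≤ θ * b * Real.log θ) → False := by
    intro b hb hbound
    refine contra_core (φ0 := φob η C z0) (φs := φob η C zs) hη hb ?_
    intro θ hθ0 hθ1
    obtain ⟨zθ, hmem, hval⟩ := seg (η := η) C V W r c hz0 hzs hθ0.le hθ1.le
    have h1 := hmin hmem
    simp only [Set.mem_setOf_eq] at h1
    rw [hval] at h1
    have h2 := mul_le_mul_of_nonneg_left (hbound θ hθ0 hθ1)
      (by positivity : (0:ℝ) ≤ 1/η)
    linarith
  have hb0 := hzs
  obtain ⟨b1, b2, b3, b4, b5, b6, b7, b8, b9, b10⟩ := hb0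
  have hD2le : ∀ θ : ℝ, 0 < θ → θ < 1 →
      (∑ i, ∑ k, (Fc θ (z0.2.1 i k) (zs.2.1 i k) + Fc θ (z0.2.2.1 i k) (zs.2.2.1 i k)
        + Fc θ (z0.2.2.2.1 i k) (zs.2.2.2.1 i k))) ≤ 0 := by
    intro θ hθ0 hθ1
    refine Finset.sum_nonpos fun i _ => Finset.sum_nonpos fun k _ => ?_
    have := Fc_nonpos (a7 i k) (b7 i k) hθ0.le hθ1.le
    have := Fc_nonpos (a8 i k) (b8 i k) hθ0.le hθ1.le
    have := Fc_nonpos (a9 i k) (b9 i k) hθ0.le hθ1.le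
    linarith
  have hD1le : ∀ θ : ℝ, 0 < θ → θ < 1 →
      (∑ i, ∑ j, Fc θ (z0.1 i j) (zs.1 i j)) ≤ 0 := by
    intro θ hθ0 hθ1
    exact Finset.sum_nonpos fun i _ => Finset.sum_nonpos fun j _ =>
      Fc_nonpos (a6 i j) (b6 i j) hθ0.le hθ1.le
  have hD3le : ∀ θ : ℝ, 0 < θ → θ < 1 → Fc θ z0.2.2.2.2 zs.2.2.2.2 ≤ 0 :=
    fun θ hθ0 hθ1 => Fc_nonpos a10 b10 hθ0.le hθ1.le
  refine ⟨?_, ?_, ?_, ?_, ?_⟩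
  · intro i j
    rcases (a6 i j).lt_or_eq with h | h
    · exact h
    exfalso
    refine finish (zs.1 i j) (hp1 i j) fun θ hθ0 hθ1 => ?_
    have hD1 : (∑ i', ∑ j', Fc θ (z0.1 i' j') (zs.1 i' j')) ≤ θ * zs.1 i j * Real.log θ := by
      have hflat : (∑ i', ∑ j', Fc θ (z0.1 i' j') (zs.1 i' j'))
          = ∑ x : Fin n × Fin n, Fc θ (z0.1 x.1 x.2) (zs.1 x.1 x.2) := by
        rw [Fintype.sum_prod_type]
      rw [hflat]
      calc (∑ x : Fin n × Fin n, Fc θ (z0.1 x.1 x.2) (zs.1 x.1 x.2))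
          ≤ ∑ x : Fin n × Fin n, (if x = (i, j) then θ * zs.1 i j * Real.log θ else 0) := by
            refine Finset.sum_le_sum fun x _ => ?_
            by_cases hx : x = (i, j)
            · subst hx
              dsimp only
              rw [if_pos rfl, ← h, Fc_zero (hp1 i j) hθ0]
            · rw [if_neg hx]
              exact Fc_nonpos (a6 x.1 x.2) (b6 x.1 x.2) hθ0.le hθ1.le
        _ = θ * zs.1 i j * Real.log θ := by simp
    have := hD2le θ hθ0 hθ1
    have := hD3le θ hθ0 hθ1
    linarith
  · intro i k
    rcases (a7 i k).lt_or_eq with h | h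
    · exact h
    exfalso
    refine finish (zs.2.1 i k) (hp2 i k) fun θ hθ0 hθ1 => ?_
    have hD2 : (∑ i', ∑ k', (Fc θ (z0.2.1 i' k') (zs.2.1 i' k')
          + Fc θ (z0.2.2.1 i' k') (zs.2.2.1 i' k')
          + Fc θ (z0.2.2.2.1 i' k') (zs.2.2.2.1 i' k')))
        ≤ θ * zs.2.1 i k * Real.log θ := by
      have hflat : (∑ i', ∑ k', (Fc θ (z0.2.1 i' k') (zs.2.1 i' k')
            + Fc θ (z0.2.2.1 i' k') (zs.2.2.1 i' k')
            + Fc θ (z0.2.2.2.1 i' k') (zs.2.2.2.1 i' k')))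
          = ∑ x : Fin n × Fin d, (Fc θ (z0.2.1 x.1 x.2) (zs.2.1 x.1 x.2)
            + Fc θ (z0.2.2.1 x.1 x.2) (zs.2.2.1 x.1 x.2)
            + Fc θ (z0.2.2.2.1 x.1 x.2) (zs.2.2.2.1 x.1 x.2)) := by
        rw [Fintype.sum_prod_type]
      rw [hflat]
      calc _ ≤ ∑ x : Fin n × Fin d, (if x = (i, k) then θ * zs.2.1 i k * Real.log θ else 0) := by
            refine Finset.sum_le_sum fun x _ => ?_
            by_cases hx : x = (i, k)
            · subst hx
              dsimp only
              rw [if_pos rfl]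
              have e1 : Fc θ (z0.2.1 i k) (zs.2.1 i k) = θ * zs.2.1 i k * Real.log θ := by
                rw [← h]; exact Fc_zero (hp2 i k) hθ0
              have e2 := Fc_nonpos (a8 i k) (b8 i k) hθ0.le hθ1.le
              have e3 := Fc_nonpos (a9 i k) (b9 i k) hθ0.le hθ1.le
              linarith [e1.le]
            · rw [if_neg hx]
              have e1 := Fc_nonpos (a7 x.1 x.2) (b7 x.1 x.2) hθ0.le hθ1.le
              have e2 := Fc_nonpos (a8 x.1 x.2) (b8 x.1 x.2) hθ0.le hθ1.le
              have e3 := Fc_nonpos (a9 x.1 x.2) (b9 x.1 x.2) hθ0.le hθ1.le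
              linarith
        _ = θ * zs.2.1 i k * Real.log θ := by simp
    have := hD1le θ hθ0 hθ1
    have := hD3le θ hθ0 hθ1
    linarith
  · intro i k
    rcases (a8 i k).lt_or_eq with h | h
    · exact h
    exfalso
    refine finish (zs.2.2.1 i k) (hp3 i k) fun θ hθ0 hθ1 => ?_
    have hD2 : (∑ i', ∑ k', (Fc θ (z0.2.1 i' k') (zs.2.1 i' k')
          + Fc θ (z0.2.2.1 i' k') (zs.2.2.1 i' k')
          + Fc θ (z0.2.2.2.1 i' k') (zs.2.2.2.1 i' k')))
        ≤ θ * zs.2.2.1 i k * Real.log θ := by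
      have hflat : (∑ i', ∑ k', (Fc θ (z0.2.1 i' k') (zs.2.1 i' k')
            + Fc θ (z0.2.2.1 i' k') (zs.2.2.1 i' k')
            + Fc θ (z0.2.2.2.1 i' k') (zs.2.2.2.1 i' k')))
          = ∑ x : Fin n × Fin d, (Fc θ (z0.2.1 x.1 x.2) (zs.2.1 x.1 x.2)
            + Fc θ (z0.2.2.1 x.1 x.2) (zs.2.2.1 x.1 x.2)
            + Fc θ (z0.2.2.2.1 x.1 x.2) (zs.2.2.2.1 x.1 x.2)) := by
        rw [Fintype.sum_prod_type]
      rw [hflat]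
      calc _ ≤ ∑ x : Fin n × Fin d, (if x = (i, k) then θ * zs.2.2.1 i k * Real.log θ else 0) := by
            refine Finset.sum_le_sum fun x _ => ?_
            by_cases hx : x = (i, k)
            · subst hx
              dsimp only
              rw [if_pos rfl]
              have e1 : Fc θ (z0.2.2.1 i k) (zs.2.2.1 i k) = θ * zs.2.2.1 i k * Real.log θ := by
                rw [← h]; exact Fc_zero (hp3 i k) hθ0
              have e2 := Fc_nonpos (a7 i k) (b7 i k) hθ0.le hθ1.le
              have e3 := Fc_nonpos (a9 i k) (b9 i k) hθ0.le hθ1.le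
              linarith [e1.le]
            · rw [if_neg hx]
              have e1 := Fc_nonpos (a7 x.1 x.2) (b7 x.1 x.2) hθ0.le hθ1.le
              have e2 := Fc_nonpos (a8 x.1 x.2) (b8 x.1 x.2) hθ0.le hθ1.le
              have e3 := Fc_nonpos (a9 x.1 x.2) (b9 x.1 x.2) hθ0.le hθ1.le
              linarith
        _ = θ * zs.2.2.1 i k * Real.log θ := by simp
    have := hD1le θ hθ0 hθ1
    have := hD3le θ hθ0 hθ1
    linarith
  · intro i k
    rcases (a9 i k).lt_or_eq with h | h
    · exact h
    exfalso
    refine finish (zs.2.2.2.1 i k) (hp4 i k) fun θ hθ0 hθ1 => ?_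
    have hD2 : (∑ i', ∑ k', (Fc θ (z0.2.1 i' k') (zs.2.1 i' k')
          + Fc θ (z0.2.2.1 i' k') (zs.2.2.1 i' k')
          + Fc θ (z0.2.2.2.1 i' k') (zs.2.2.2.1 i' k')))
        ≤ θ * zs.2.2.2.1 i k * Real.log θ := by
      have hflat : (∑ i', ∑ k', (Fc θ (z0.2.1 i' k') (zs.2.1 i' k')
            + Fc θ (z0.2.2.1 i' k') (zs.2.2.1 i' k')
            + Fc θ (z0.2.2.2.1 i' k') (zs.2.2.2.1 i' k')))
          = ∑ x : Fin n × Fin d, (Fc θ (z0.2.1 x.1 x.2) (zs.2.1 x.1 x.2)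
            + Fc θ (z0.2.2.1 x.1 x.2) (zs.2.2.1 x.1 x.2)
            + Fc θ (z0.2.2.2.1 x.1 x.2) (zs.2.2.2.1 x.1 x.2)) := by
        rw [Fintype.sum_prod_type]
      rw [hflat]
      calc _ ≤ ∑ x : Fin n × Fin d, (if x = (i, k) then θ * zs.2.2.2.1 i k * Real.log θ else 0) := by
            refine Finset.sum_le_sum fun x _ => ?_
            by_cases hx : x = (i, k)
            · subst hx
              dsimp only
              rw [if_pos rfl]
              have e1 : Fc θ (z0.2.2.2.1 i k) (zs.2.2.2.1 i k) = θ * zs.2.2.2.1 i k * Real.log θ := by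
                rw [← h]; exact Fc_zero (hp4 i k) hθ0
              have e2 := Fc_nonpos (a7 i k) (b7 i k) hθ0.le hθ1.le
              have e3 := Fc_nonpos (a8 i k) (b8 i k) hθ0.le hθ1.le
              linarith [e1.le]
            · rw [if_neg hx]
              have e1 := Fc_nonpos (a7 x.1 x.2) (b7 x.1 x.2) hθ0.le hθ1.le
              have e2 := Fc_nonpos (a8 x.1 x.2) (b8 x.1 x.2) hθ0.le hθ1.le
              have e3 := Fc_nonpos (a9 x.1 x.2) (b9 x.1 x.2) hθ0.le hθ1.le
              linarith
        _ = θ * zs.2.2.2.1 i k * Real.log θ := by simp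
    have := hD1le θ hθ0 hθ1
    have := hD3le θ hθ0 hθ1
    linarith
  · rcases a10.lt_or_eq with h | h
    · exact h
    exfalso
    refine finish zs.2.2.2.2 hp5 fun θ hθ0 hθ1 => ?_
    have hD3 : Fc θ z0.2.2.2.2 zs.2.2.2.2 = θ * zs.2.2.2.2 * Real.log θ := by
      rw [← h]; exact Fc_zero hp5 hθ0
    have := hD1le θ hθ0 hθ1
    have := hD2le θ hθ0 hθ1
    linarith [hD3.le]

lemma hasDerivAt_affine (a b : ℝ) : HasDerivAt (fun θ : ℝ => a + θ * b) b 0 := by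
  simpa using ((hasDerivAt_id (0:ℝ)).mul_const b).const_add a

lemma hasDerivAt_ent_affine {a : ℝ} (ha : a ≠ 0) (b : ℝ) :
    HasDerivAt (fun θ : ℝ => ent (a + θ * b)) ((Real.log a + 1) * b) 0 := by
  have h2 : HasDerivAt (fun x : ℝ => x * Real.log x) (Real.log a + 1)
      ((fun θ : ℝ => a + θ * b) 0) := by
    simpa using Real.hasDerivAt_mul_log (x := a) ha
  simpa [ent, Function.comp_def] using h2.comp 0 (hasDerivAt_affine a b)

lemma stationarity {n d : ℕ} {η ε : ℝ} (C : Matrix (Fin n) (Fin n) ℝ)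
    (V W : Matrix (Fin n) (Fin d) ℝ) (r c : Fin n → ℝ)
    {z0 : Z n d} (hz0 : z0 ∈ KS V W r c ε) (hmin : IsMinOn (φob η C) (KS V W r c ε) z0)
    (pP : ∀ i j, 0 < z0.1 i j) (pS : ∀ i k, 0 < z0.2.1 i k)
    (pT : ∀ i k, 0 < z0.2.2.1 i k) (pE : ∀ i k, 0 < z0.2.2.2.1 i k)
    (pq : 0 < z0.2.2.2.2)
    (DP : Matrix (Fin n) (Fin n) ℝ) (DE : Matrix (Fin n) (Fin d) ℝ)
    (hrow : ∀ i, ∑ j, DP i j = 0) (hcol : ∀ j, ∑ i, DP i j = 0) :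
    (∑ i, ∑ j, C i j * DP i j)
    + (1/η) * ((∑ i, ∑ j, (Real.log (z0.1 i j) + 1) * DP i j)
      + (∑ i, ∑ k, ((Real.log (z0.2.1 i k) + 1) * (DE i k - ∑ j, DP i j * V j k)
          + (Real.log (z0.2.2.1 i k) + 1) * ((∑ j, DP i j * V j k) + DE i k)
          + (Real.log (z0.2.2.2.1 i k) + 1) * DE i k))
      + (Real.log z0.2.2.2.2 + 1) * (-(∑ i, ∑ k, DE i k))) = 0 := by
  have h0' := hz0
  obtain ⟨a1, a2, a3, a4, a5, a6, a7, a8, a9, a10⟩ := h0'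
  have hS0e : ∀ i k, z0.2.1 i k = W i k - (∑ j, z0.1 i j * V j k) + z0.2.2.2.1 i k := by
    intro i k; rw [a3]; simp [Matrix.sub_apply, Matrix.add_apply, Matrix.mul_apply]
  have hT0e : ∀ i k, z0.2.2.1 i k = (∑ j, z0.1 i j * V j k) - W i k + z0.2.2.2.1 i k := by
    intro i k; rw [a4]; simp [Matrix.sub_apply, Matrix.add_apply, Matrix.mul_apply]
  set zc : ℝ → Z n d := fun θ =>
    (fun i j => z0.1 i j + θ * DP i j,
     fun i k => z0.2.1 i k + θ * (DE i k - ∑ j, DP i j * V j k),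
     fun i k => z0.2.2.1 i k + θ * ((∑ j, DP i j * V j k) + DE i k),
     fun i k => z0.2.2.2.1 i k + θ * DE i k,
     z0.2.2.2.2 + θ * (-(∑ i, ∑ k, DE i k))) with hzc
  set g : ℝ → ℝ := fun θ => φob η C (zc θ) with hg
  have hgu : g = fun θ =>
      (∑ i, ∑ j, C i j * (z0.1 i j + θ * DP i j))
      + (1/η) * ((∑ i, ∑ j, ent (z0.1 i j + θ * DP i j))
        + (∑ i, ∑ k, (ent (z0.2.1 i k + θ * (DE i k - ∑ j, DP i j * V j k))
            + ent (z0.2.2.1 i k + θ * ((∑ j, DP i j * V j k) + DE i k))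
            + ent (z0.2.2.2.1 i k + θ * DE i k)))
        + ent (z0.2.2.2.2 + θ * (-(∑ i, ∑ k, DE i k)))) := by
    funext θ
    simp only [hg, hzc, φob, pObj, Htot]
  have hDg : HasDerivAt g
      ((∑ i, ∑ j, C i j * DP i j)
      + (1/η) * ((∑ i, ∑ j, (Real.log (z0.1 i j) + 1) * DP i j)
        + (∑ i, ∑ k, ((Real.log (z0.2.1 i k) + 1) * (DE i k - ∑ j, DP i j * V j k)
            + (Real.log (z0.2.2.1 i k) + 1) * ((∑ j, DP i j * V j k) + DE i k)
            + (Real.log (z0.2.2.2.1 i k) + 1) * DE i k))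
        + (Real.log z0.2.2.2.2 + 1) * (-(∑ i, ∑ k, DE i k)))) 0 := by
    rw [hgu]
    refine HasDerivAt.add ?_ (HasDerivAt.const_mul _ (HasDerivAt.add (HasDerivAt.add ?_ ?_) ?_))
    · exact HasDerivAt.fun_sum fun i _ => HasDerivAt.fun_sum fun j _ =>
        (hasDerivAt_affine (z0.1 i j) (DP i j)).const_mul (C i j)
    · exact HasDerivAt.fun_sum fun i _ => HasDerivAt.fun_sum fun j _ =>
        hasDerivAt_ent_affine (pP i j).ne' (DP i j)
    · exact HasDerivAt.fun_sum fun i _ => HasDerivAt.fun_sum fun k _ =>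
        ((hasDerivAt_ent_affine (pS i k).ne' _).add
          (hasDerivAt_ent_affine (pT i k).ne' _)).add
          (hasDerivAt_ent_affine (pE i k).ne' _)
    · exact hasDerivAt_ent_affine pq.ne' _
  have hzc0 : zc 0 = z0 := by
    rw [hzc]
    refine Prod.ext ?_ (Prod.ext ?_ (Prod.ext ?_ (Prod.ext ?_ ?_))) <;>
      simp <;> rfl
  have hev : ∀ᶠ θ : ℝ in nhds 0, zc θ ∈ KS V W r c ε := by
    have hposP : ∀ᶠ θ : ℝ in nhds 0, ∀ i j, 0 < z0.1 i j + θ * DP i j := by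
      refine Filter.eventually_all.mpr fun i => Filter.eventually_all.mpr fun j => ?_
      have hc : ContinuousAt (fun θ : ℝ => z0.1 i j + θ * DP i j) 0 := by fun_prop
      have := hc.tendsto.eventually (eventually_gt_nhds (by simpa using pP i j))
      simpa using this
    have hposS : ∀ᶠ θ : ℝ in nhds 0, ∀ i k,
        0 < z0.2.1 i k + θ * (DE i k - ∑ j, DP i j * V j k) := by
      refine Filter.eventually_all.mpr fun i => Filter.eventually_all.mpr fun k => ?_
      have hc : ContinuousAt (fun θ : ℝ =>
          z0.2.1 i k + θ * (DE i k - ∑ j, DP i j * V j k)) 0 := by fun_prop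
      have := hc.tendsto.eventually (eventually_gt_nhds (by simpa using pS i k))
      simpa using this
    have hposT : ∀ᶠ θ : ℝ in nhds 0, ∀ i k,
        0 < z0.2.2.1 i k + θ * ((∑ j, DP i j * V j k) + DE i k) := by
      refine Filter.eventually_all.mpr fun i => Filter.eventually_all.mpr fun k => ?_
      have hc : ContinuousAt (fun θ : ℝ =>
          z0.2.2.1 i k + θ * ((∑ j, DP i j * V j k) + DE i k)) 0 := by fun_prop
      have := hc.tendsto.eventually (eventually_gt_nhds (by simpa using pT i k))
      simpa using this
    have hposE : ∀ᶠ θ : ℝ in nhds 0, ∀ i k, 0 < z0.2.2.2.1 i k + θ * DE i k := by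
      refine Filter.eventually_all.mpr fun i => Filter.eventually_all.mpr fun k => ?_
      have hc : ContinuousAt (fun θ : ℝ => z0.2.2.2.1 i k + θ * DE i k) 0 := by fun_prop
      have := hc.tendsto.eventually (eventually_gt_nhds (by simpa using pE i k))
      simpa using this
    have hposq : ∀ᶠ θ : ℝ in nhds 0,
        0 < z0.2.2.2.2 + θ * (-(∑ i, ∑ k, DE i k)) := by
      have hc : ContinuousAt (fun θ : ℝ =>
          z0.2.2.2.2 + θ * (-(∑ i, ∑ k, DE i k))) 0 := by fun_prop
      have := hc.tendsto.eventually (eventually_gt_nhds (by simpa using pq))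
      simpa using this
    filter_upwards [hposP, hposS, hposT, hposE, hposq] with θ e1 e2 e3 e4 e5
    have keyv : ∀ (i : Fin n) (k : Fin d),
        (∑ j, (z0.1 i j + θ * DP i j) * V j k)
          = (∑ j, z0.1 i j * V j k) + θ * (∑ j, DP i j * V j k) := by
      intro i k
      rw [Finset.mul_sum, ← Finset.sum_add_distrib]
      exact Finset.sum_congr rfl fun j _ => by ring
    refine ⟨?_, ?_, ?_, ?_, ?_, fun i j => (e1 i j).le, fun i k => (e2 i k).le,
      fun i k => (e3 i k).le, fun i k => (e4 i k).le, e5.le⟩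
    · intro i
      rw [Finset.sum_add_distrib, ← Finset.mul_sum, hrow i, a1 i]; ring
    · intro j
      rw [Finset.sum_add_distrib, ← Finset.mul_sum, hcol j, a2 j]; ring
    · ext i k
      show z0.2.1 i k + θ * (DE i k - ∑ j, DP i j * V j k)
        = W i k - (∑ j, (z0.1 i j + θ * DP i j) * V j k) + (z0.2.2.2.1 i k + θ * DE i k)
      rw [keyv i k, hS0e i k]; ring
    · ext i k
      show z0.2.2.1 i k + θ * ((∑ j, DP i j * V j k) + DE i k)
        = (∑ j, (z0.1 i j + θ * DP i j) * V j k) - W i k + (z0.2.2.2.1 i k + θ * DE i k)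
      rw [keyv i k, hT0e i k]; ring
    · have he : (∑ i, ∑ k, (z0.2.2.2.1 i k + θ * DE i k))
          = (∑ i, ∑ k, z0.2.2.2.1 i k) + θ * (∑ i, ∑ k, DE i k) := by
        rw [← dsum_mul θ DE, ← dsum_add (fun i k => z0.2.2.2.1 i k) (fun i k => θ * DE i k)]
      simp only [hzc]
      rw [he]
      linarith [a5]
  have hloc : IsLocalMin g 0 := by
    refine hev.mono fun θ hmem => ?_
    have h6 := hmin hmem
    simp only [Set.mem_setOf_eq] at h6
    rw [hg]
    simpa [hzc0] using h6
  exact hloc.hasDerivAt_eq_zero hDg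

lemma dsum_delta' {m k : ℕ} (f : Fin m → Fin k → ℝ) (i : Fin m) (j : Fin k) :
    (∑ i', ∑ j', f i' j' * (if i' = i ∧ j' = j then (1:ℝ) else 0)) = f i j := by
  simp [ite_and, mul_ite, Finset.sum_ite_eq']

lemma dsum_quad {n : ℕ} (f : Fin n → Fin n → ℝ) (i i' j j' : Fin n) :
    (∑ a, ∑ b, f a b * ((if a = i ∧ b = j then (1:ℝ) else 0)
      + (if a = i' ∧ b = j' then (1:ℝ) else 0)
      - (if a = i ∧ b = j' then (1:ℝ) else 0)
      - (if a = i' ∧ b = j then (1:ℝ) else 0)))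
    = f i j + f i' j' - f i j' - f i' j := by
  have expand : ∀ a b, f a b * ((if a = i ∧ b = j then (1:ℝ) else 0)
      + (if a = i' ∧ b = j' then (1:ℝ) else 0)
      - (if a = i ∧ b = j' then (1:ℝ) else 0)
      - (if a = i' ∧ b = j then (1:ℝ) else 0))
      = f a b * (if a = i ∧ b = j then (1:ℝ) else 0)
        + f a b * (if a = i' ∧ b = j' then (1:ℝ) else 0)
        - f a b * (if a = i ∧ b = j' then (1:ℝ) else 0)
        - f a b * (if a = i' ∧ b = j then (1:ℝ) else 0) := fun a b => by ring
  rw [Finset.sum_congr rfl fun a _ => Finset.sum_congr rfl fun b _ => expand a b]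
  rw [dsum_sub, dsum_sub, dsum_add, dsum_delta', dsum_delta', dsum_delta', dsum_delta']

lemma dsum_ite_row {n d : ℕ} (g : Fin n → Fin d → ℝ) (v : Fin d → ℝ) (i : Fin n) :
    (∑ a, ∑ k', g a k' * (if a = i then v k' else 0)) = ∑ k', g i k' * v k' := by
  have h1 : ∀ a, (∑ k', g a k' * (if a = i then v k' else 0))
      = if a = i then ∑ k', g a k' * v k' else 0 := by
    intro a
    split_ifs with h
    · rfl
    · simp
  rw [Finset.sum_congr rfl fun a _ => h1 a]
  simp [Finset.sum_ite_eq']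

lemma Econd {n d : ℕ} {η ε : ℝ} (hη : 0 < η) (C : Matrix (Fin n) (Fin n) ℝ)
    (V W : Matrix (Fin n) (Fin d) ℝ) (r c : Fin n → ℝ)
    {z0 : Z n d} (hz0 : z0 ∈ KS V W r c ε) (hmin : IsMinOn (φob η C) (KS V W r c ε) z0)
    (pP : ∀ i j, 0 < z0.1 i j) (pS : ∀ i k, 0 < z0.2.1 i k)
    (pT : ∀ i k, 0 < z0.2.2.1 i k) (pE : ∀ i k, 0 < z0.2.2.2.1 i k)
    (pq : 0 < z0.2.2.2.2) (i : Fin n) (k : Fin d) :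
    Real.log (z0.2.1 i k) + Real.log (z0.2.2.1 i k) + Real.log (z0.2.2.2.1 i k) + 2
      = Real.log z0.2.2.2.2 := by
  have hst := stationarity C V W r c hz0 hmin pP pS pT pE pq (fun _ _ => (0:ℝ))
    (fun i' k' => if i' = i ∧ k' = k then (1:ℝ) else 0) (fun _ => by simp) (fun _ => by simp)
  beta_reduce at hst
  simp only [zero_mul, mul_zero, Finset.sum_const_zero, sub_zero, zero_add, add_zero] at hst
  have h1 : (∑ i' : Fin n, ∑ k' : Fin d, (if i' = i ∧ k' = k then (1:ℝ) else 0)) = 1 := by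
    simp [ite_and, Finset.sum_ite_eq']
  rw [h1] at hst
  have h2 : (∑ i', ∑ k', ((Real.log (z0.2.1 i' k') + 1) * (if i' = i ∧ k' = k then (1:ℝ) else 0)
          + (Real.log (z0.2.2.1 i' k') + 1) * (if i' = i ∧ k' = k then (1:ℝ) else 0)
          + (Real.log (z0.2.2.2.1 i' k') + 1) * (if i' = i ∧ k' = k then (1:ℝ) else 0)))
      = (Real.log (z0.2.1 i k) + 1) + (Real.log (z0.2.2.1 i k) + 1)
        + (Real.log (z0.2.2.2.1 i k) + 1) := by
    have expand : ∀ i' k', ((Real.log (z0.2.1 i' k') + 1) * (if i' = i ∧ k' = k then (1:ℝ) else 0)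
          + (Real.log (z0.2.2.1 i' k') + 1) * (if i' = i ∧ k' = k then (1:ℝ) else 0)
          + (Real.log (z0.2.2.2.1 i' k') + 1) * (if i' = i ∧ k' = k then (1:ℝ) else 0))
        = (Real.log (z0.2.1 i' k') + 1 + (Real.log (z0.2.2.1 i' k') + 1)
            + (Real.log (z0.2.2.2.1 i' k') + 1))
            * (if i' = i ∧ k' = k then (1:ℝ) else 0) := by
      intro i' k'; ring
    rw [Finset.sum_congr rfl fun i' _ => Finset.sum_congr rfl fun k' _ => expand i' k']
    simp [ite_and, mul_ite, Finset.sum_ite_eq']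
  rw [h2] at hst
  have hη' : η ≠ 0 := ne_of_gt hη
  field_simp at hst
  linarith

lemma Pcond {n d : ℕ} {η ε : ℝ} (hη : 0 < η) (C : Matrix (Fin n) (Fin n) ℝ)
    (V W : Matrix (Fin n) (Fin d) ℝ) (r c : Fin n → ℝ)
    {z0 : Z n d} (hz0 : z0 ∈ KS V W r c ε) (hmin : IsMinOn (φob η C) (KS V W r c ε) z0)
    (pP : ∀ i j, 0 < z0.1 i j) (pS : ∀ i k, 0 < z0.2.1 i k)
    (pT : ∀ i k, 0 < z0.2.2.1 i k) (pE : ∀ i k, 0 < z0.2.2.2.1 i k)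
    (pq : 0 < z0.2.2.2.2) (i i' j j' : Fin n) :
    (C i j + (1/η) * (Real.log (z0.1 i j) + 1)
        + (1/η) * ∑ k', (Real.log (z0.2.2.1 i k') - Real.log (z0.2.1 i k')) * V j k')
    + (C i' j' + (1/η) * (Real.log (z0.1 i' j') + 1)
        + (1/η) * ∑ k', (Real.log (z0.2.2.1 i' k') - Real.log (z0.2.1 i' k')) * V j' k')
    - (C i j' + (1/η) * (Real.log (z0.1 i j') + 1)
        + (1/η) * ∑ k', (Real.log (z0.2.2.1 i k') - Real.log (z0.2.1 i k')) * V j' k')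
    - (C i' j + (1/η) * (Real.log (z0.1 i' j) + 1)
        + (1/η) * ∑ k', (Real.log (z0.2.2.1 i' k') - Real.log (z0.2.1 i' k')) * V j k')
    = 0 := by
  have hrow : ∀ a : Fin n, (∑ b, ((if a = i ∧ b = j then (1:ℝ) else 0)
      + (if a = i' ∧ b = j' then (1:ℝ) else 0)
      - (if a = i ∧ b = j' then (1:ℝ) else 0)
      - (if a = i' ∧ b = j then (1:ℝ) else 0))) = 0 := by
    intro a
    rw [Finset.sum_sub_distrib, Finset.sum_sub_distrib, Finset.sum_add_distrib]
    simp [ite_and, Finset.sum_ite_eq']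
  have hcol : ∀ b : Fin n, (∑ a, ((if a = i ∧ b = j then (1:ℝ) else 0)
      + (if a = i' ∧ b = j' then (1:ℝ) else 0)
      - (if a = i ∧ b = j' then (1:ℝ) else 0)
      - (if a = i' ∧ b = j then (1:ℝ) else 0))) = 0 := by
    intro b
    rw [Finset.sum_sub_distrib, Finset.sum_sub_distrib, Finset.sum_add_distrib]
    simp only [ite_and, Finset.sum_ite_eq', Finset.mem_univ, if_true]
    ring
  have hst := stationarity C V W r c hz0 hmin pP pS pT pE pq
    (fun a b => (if a = i ∧ b = j then (1:ℝ) else 0)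
      + (if a = i' ∧ b = j' then (1:ℝ) else 0)
      - (if a = i ∧ b = j' then (1:ℝ) else 0)
      - (if a = i' ∧ b = j then (1:ℝ) else 0))
    (fun _ _ => (0:ℝ)) hrow hcol
  beta_reduce at hst
  rw [dsum_quad C i i' j j', dsum_quad (fun a b => Real.log (z0.1 a b) + 1) i i' j j'] at hst
  have hDPV : ∀ (a : Fin n) (k' : Fin d), (∑ b, ((if a = i ∧ b = j then (1:ℝ) else 0)
      + (if a = i' ∧ b = j' then (1:ℝ) else 0)
      - (if a = i ∧ b = j' then (1:ℝ) else 0)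
      - (if a = i' ∧ b = j then (1:ℝ) else 0)) * V b k')
      = (if a = i then V j k' else 0) + (if a = i' then V j' k' else 0)
        - (if a = i then V j' k' else 0) - (if a = i' then V j k' else 0) := by
    intro a k'
    have expand : ∀ b, ((if a = i ∧ b = j then (1:ℝ) else 0)
      + (if a = i' ∧ b = j' then (1:ℝ) else 0)
      - (if a = i ∧ b = j' then (1:ℝ) else 0)
      - (if a = i' ∧ b = j then (1:ℝ) else 0)) * V b k'
        = (if a = i ∧ b = j then (1:ℝ) else 0) * V b k'
          + (if a = i' ∧ b = j' then (1:ℝ) else 0) * V b k'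
          - (if a = i ∧ b = j' then (1:ℝ) else 0) * V b k'
          - (if a = i' ∧ b = j then (1:ℝ) else 0) * V b k' := fun b => by ring
    rw [Finset.sum_congr rfl fun b _ => expand b]
    rw [Finset.sum_sub_distrib, Finset.sum_sub_distrib, Finset.sum_add_distrib]
    congr 1
    · congr 1
      · congr 1 <;> simp [ite_and, Finset.sum_ite_eq']
      · simp [ite_and, Finset.sum_ite_eq']
    · simp [ite_and, Finset.sum_ite_eq']
  have hblk : (∑ a, ∑ k', ((Real.log (z0.2.1 a k') + 1) * ((0:ℝ) - ∑ b, ((if a = i ∧ b = j then (1:ℝ) else 0)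
          + (if a = i' ∧ b = j' then (1:ℝ) else 0)
          - (if a = i ∧ b = j' then (1:ℝ) else 0)
          - (if a = i' ∧ b = j then (1:ℝ) else 0)) * V b k')
        + (Real.log (z0.2.2.1 a k') + 1) * ((∑ b, ((if a = i ∧ b = j then (1:ℝ) else 0)
          + (if a = i' ∧ b = j' then (1:ℝ) else 0)
          - (if a = i ∧ b = j' then (1:ℝ) else 0)
          - (if a = i' ∧ b = j then (1:ℝ) else 0)) * V b k') + (0:ℝ))
        + (Real.log (z0.2.2.2.1 a k') + 1) * (0:ℝ)))
      = (∑ k', (Real.log (z0.2.2.1 i k') - Real.log (z0.2.1 i k')) * V j k')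
        + (∑ k', (Real.log (z0.2.2.1 i' k') - Real.log (z0.2.1 i' k')) * V j' k')
        - (∑ k', (Real.log (z0.2.2.1 i k') - Real.log (z0.2.1 i k')) * V j' k')
        - (∑ k', (Real.log (z0.2.2.1 i' k') - Real.log (z0.2.1 i' k')) * V j k') := by
    have step1 : ∀ (a : Fin n) (k' : Fin d), ((Real.log (z0.2.1 a k') + 1) * ((0:ℝ) - ∑ b, ((if a = i ∧ b = j then (1:ℝ) else 0)
          + (if a = i' ∧ b = j' then (1:ℝ) else 0)
          - (if a = i ∧ b = j' then (1:ℝ) else 0)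
          - (if a = i' ∧ b = j then (1:ℝ) else 0)) * V b k')
        + (Real.log (z0.2.2.1 a k') + 1) * ((∑ b, ((if a = i ∧ b = j then (1:ℝ) else 0)
          + (if a = i' ∧ b = j' then (1:ℝ) else 0)
          - (if a = i ∧ b = j' then (1:ℝ) else 0)
          - (if a = i' ∧ b = j then (1:ℝ) else 0)) * V b k') + (0:ℝ))
        + (Real.log (z0.2.2.2.1 a k') + 1) * (0:ℝ))
        = (Real.log (z0.2.2.1 a k') - Real.log (z0.2.1 a k')) * ((if a = i then V j k' else 0)
          + (if a = i' then V j' k' else 0)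
          - (if a = i then V j' k' else 0) - (if a = i' then V j k' else 0)) := by
      intro a k'
      rw [hDPV a k']
      ring
    rw [Finset.sum_congr rfl fun a _ => Finset.sum_congr rfl fun k' _ => step1 a k']
    have step2 : ∀ (a : Fin n) (k' : Fin d),
        (Real.log (z0.2.2.1 a k') - Real.log (z0.2.1 a k')) * ((if a = i then V j k' else 0)
          + (if a = i' then V j' k' else 0)
          - (if a = i then V j' k' else 0) - (if a = i' then V j k' else 0))
        = (Real.log (z0.2.2.1 a k') - Real.log (z0.2.1 a k')) * (if a = i then V j k' else 0)
          + (Real.log (z0.2.2.1 a k') - Real.log (z0.2.1 a k')) * (if a = i' then V j' k' else 0)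
          - (Real.log (z0.2.2.1 a k') - Real.log (z0.2.1 a k')) * (if a = i then V j' k' else 0)
          - (Real.log (z0.2.2.1 a k') - Real.log (z0.2.1 a k')) * (if a = i' then V j k' else 0) :=
      fun a k' => by ring
    rw [Finset.sum_congr rfl fun a _ => Finset.sum_congr rfl fun k' _ => step2 a k']
    rw [dsum_sub, dsum_sub, dsum_add, dsum_ite_row, dsum_ite_row, dsum_ite_row, dsum_ite_row]
  rw [hblk] at hst
  simp only [Finset.sum_const_zero, mul_zero, neg_zero, add_zero] at hst
  linear_combination hst

end EMOT

theorem stmt10 (n d : ℕ) (hn : 0 < n) (hd : 0 < d)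
    (η ε : ℝ) (hη : 0 < η) (hε : 0 < ε)
    (C : Matrix (Fin n) (Fin n) ℝ) (V W : Matrix (Fin n) (Fin d) ℝ)
    (r c : Fin n → ℝ)
    (hslater : ∃ (P : Matrix (Fin n) (Fin n) ℝ) (S T E : Matrix (Fin n) (Fin d) ℝ)
      (q : ℝ), FeasQ V W r c ε P S T E q ∧
        (∀ i j, 0 < P i j) ∧ (∀ i k, 0 < S i k) ∧ (∀ i k, 0 < T i k) ∧
        (∀ i k, 0 < E i k) ∧ 0 < q) :
    sInf {z : ℝ | ∃ (P : Matrix (Fin n) (Fin n) ℝ) (S T E : Matrix (Fin n) (Fin d) ℝ)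
        (q : ℝ), FeasQ V W r c ε P S T E q ∧
        z = (∑ i, ∑ j, C i j * P i j) + (1 / η) * Htot P S T E q} =
    sSup {z : ℝ | ∃ (x y : Fin n → ℝ) (A B : Matrix (Fin n) (Fin d) ℝ) (u : ℝ),
        z = dualF η ε C V W r c x y A B u} := by
  classical
  set Sp := {z : ℝ | ∃ (P : Matrix (Fin n) (Fin n) ℝ) (S T E : Matrix (Fin n) (Fin d) ℝ)
      (q : ℝ), FeasQ V W r c ε P S T E q ∧
      z = (∑ i, ∑ j, C i j * P i j) + (1 / η) * Htot P S T E q} with hSp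
  set Sd := {z : ℝ | ∃ (x y : Fin n → ℝ) (A B : Matrix (Fin n) (Fin d) ℝ) (u : ℝ),
      z = dualF η ε C V W r c x y A B u} with hSd
  obtain ⟨Ps, Ss, Ts, Es, qs, hfeasS, hp1, hp2, hp3, hp4, hp5⟩ := hslater
  have hzsmem : ((Ps, Ss, Ts, Es, qs) : EMOT.Z n d) ∈ EMOT.KS V W r c ε := hfeasS
  have hKne : (EMOT.KS V W r c ε).Nonempty := ⟨_, hzsmem⟩
  obtain ⟨z0, hz0, hmin⟩ := EMOT.exists_min η C V W r c ε hKne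
  obtain ⟨pP, pS, pT, pE, pq⟩ := EMOT.min_pos hη C V W r c hzsmem hp1 hp2 hp3 hp4 hp5 hz0 hmin
  -- weak duality
  have weak : ∀ (P : Matrix (Fin n) (Fin n) ℝ) (S T E : Matrix (Fin n) (Fin d) ℝ) (q : ℝ),
      FeasQ V W r c ε P S T E q → ∀ (x y : Fin n → ℝ) (A B : Matrix (Fin n) (Fin d) ℝ)
      (u : ℝ), dualF η ε C V W r c x y A B u
        ≤ (∑ i, ∑ j, C i j * P i j) + (1 / η) * Htot P S T E q := by
    intro P S T E q hF x y A B u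
    obtain ⟨f1, f2, f3, f4, f5, f6, f7, f8, f9, f10⟩ := hF
    have hg := EMOT.gap (η := η) (ε := ε) C V W r c P S T E q f1 f2 f3 f4 f5 x y A B u
    have h1 : 0 ≤ ∑ i, ∑ j, EMOT.Phi η (-(C i j) + (∑ k, (A i k + B i k) * V j k)
        + x i + y j) (P i j) :=
      Finset.sum_nonneg fun i _ => Finset.sum_nonneg fun j _ =>
        EMOT.Phi_nonneg hη _ (f6 i j)
    have h2 : 0 ≤ ∑ i, ∑ k, (EMOT.Phi η (A i k) (S i k) + EMOT.Phi η (-(B i k)) (T i k)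
        + EMOT.Phi η (u - A i k + B i k) (E i k)) :=
      Finset.sum_nonneg fun i _ => Finset.sum_nonneg fun k _ =>
        add_nonneg (add_nonneg (EMOT.Phi_nonneg hη _ (f7 i k))
          (EMOT.Phi_nonneg hη _ (f8 i k))) (EMOT.Phi_nonneg hη _ (f9 i k))
    have h3 : 0 ≤ EMOT.Phi η u q := EMOT.Phi_nonneg hη _ f10
    have : EMOT.pObj η C P S T E q = (∑ i, ∑ j, C i j * P i j) + (1 / η) * Htot P S T E q := rfl
    linarith [hg, this]
  -- the optimal dual variables
  set A : Matrix (Fin n) (Fin d) ℝ := fun i k => (Real.log (z0.2.1 i k) + 1)/η with hA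
  set B : Matrix (Fin n) (Fin d) ℝ := fun i k => -((Real.log (z0.2.2.1 i k) + 1)/η) with hB
  set u : ℝ := (Real.log z0.2.2.2.2 + 1)/η with hu
  set G : Fin n → Fin n → ℝ := fun a b => C a b + (1/η) * (Real.log (z0.1 a b) + 1)
      + (1/η) * ∑ k', (Real.log (z0.2.2.1 a k') - Real.log (z0.2.1 a k')) * V b k' with hG
  set i0 : Fin n := ⟨0, hn⟩ with hi0
  set x : Fin n → ℝ := fun a => G a i0 with hx
  set y : Fin n → ℝ := fun b => G i0 b - G i0 i0 with hy
  have hxy : ∀ a b, x a + y b = G a b := by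
    intro a b
    have hp := EMOT.Pcond hη C V W r c hz0 hmin pP pS pT pE pq a i0 b i0
    rw [hx, hy, hG]
    simp only [hG] at *
    linarith [hp]
  have hη' : η ≠ 0 := ne_of_gt hη
  obtain ⟨a1, a2, a3, a4, a5, a6, a7, a8, a9, a10⟩ := hz0
  -- the five exactness identities
  have hSx : ∀ i k, z0.2.1 i k = Real.exp (η * A i k - 1) := by
    intro i k
    rw [hA]
    have : η * ((Real.log (z0.2.1 i k) + 1)/η) - 1 = Real.log (z0.2.1 i k) := by
      field_simp
      ring
    rw [this, Real.exp_log (pS i k)]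
  have hTx : ∀ i k, z0.2.2.1 i k = Real.exp (η * (-(B i k)) - 1) := by
    intro i k
    rw [hB]
    have : η * (-(-((Real.log (z0.2.2.1 i k) + 1)/η))) - 1 = Real.log (z0.2.2.1 i k) := by
      field_simp
      ring
    rw [this, Real.exp_log (pT i k)]
  have hqx : z0.2.2.2.2 = Real.exp (η * u - 1) := by
    rw [hu]
    have : η * ((Real.log z0.2.2.2.2 + 1)/η) - 1 = Real.log z0.2.2.2.2 := by
      field_simp
      ring
    rw [this, Real.exp_log pq]
  have hEx : ∀ i k, z0.2.2.2.1 i k = Real.exp (η * (u - A i k + B i k) - 1) := by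
    intro i k
    have hec := EMOT.Econd hη C V W r c ⟨a1, a2, a3, a4, a5, a6, a7, a8, a9, a10⟩
      hmin pP pS pT pE pq i k
    rw [hA, hB, hu]
    have : η * ((Real.log z0.2.2.2.2 + 1)/η - (Real.log (z0.2.1 i k) + 1)/η
        + -((Real.log (z0.2.2.1 i k) + 1)/η)) - 1 = Real.log (z0.2.2.2.1 i k) := by
      field_simp
      linarith [hec]
    rw [this, Real.exp_log (pE i k)]
  have hPx : ∀ a b, z0.1 a b
      = Real.exp (η * (-(C a b) + (∑ k, (A a k + B a k) * V b k) + x a + y b) - 1) := by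
    intro a b
    have hsum : (∑ k, (A a k + B a k) * V b k)
        = (1/η) * ∑ k', (Real.log (z0.2.1 a k') - Real.log (z0.2.2.1 a k')) * V b k' := by
      rw [Finset.mul_sum]
      refine Finset.sum_congr rfl fun k _ => ?_
      have hab : A a k + B a k
          = (1/η) * (Real.log (z0.2.1 a k) - Real.log (z0.2.2.1 a k)) := by
        rw [hA, hB]
        field_simp
        ring
      rw [hab]
      ring
    have hsum2 : (∑ k', (Real.log (z0.2.1 a k') - Real.log (z0.2.2.1 a k')) * V b k')
        = -(∑ k', (Real.log (z0.2.2.1 a k') - Real.log (z0.2.1 a k')) * V b k') := by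
      rw [← Finset.sum_neg_distrib]
      exact Finset.sum_congr rfl fun k _ => by ring
    have hexp : η * (-(C a b) + (∑ k, (A a k + B a k) * V b k) + x a + y b) - 1
        = Real.log (z0.1 a b) := by
      rw [hsum, hsum2]
      have h7 := hxy a b
      simp only [hG] at h7
      field_simp at h7 ⊢
      linarith
    rw [hexp, Real.exp_log (pP a b)]
  -- gap is zero at the optimum
  have hgap0 : EMOT.pObj η C z0.1 z0.2.1 z0.2.2.1 z0.2.2.2.1 z0.2.2.2.2
      - dualF η ε C V W r c x y A B u = 0 := by
    rw [EMOT.gap (η := η) (ε := ε) C V W r c z0.1 z0.2.1 z0.2.2.1 z0.2.2.2.1 z0.2.2.2.2 a1 a2 a3 a4 a5 x y A B u]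
    have t1 : (∑ i, ∑ j, EMOT.Phi η (-(C i j) + (∑ k, (A i k + B i k) * V j k)
        + x i + y j) (z0.1 i j)) = 0 := by
      refine Finset.sum_eq_zero fun i _ => Finset.sum_eq_zero fun j _ => ?_
      exact EMOT.Phi_zero hη _ _ (hPx i j)
    have t2 : (∑ i, ∑ k, (EMOT.Phi η (A i k) (z0.2.1 i k)
        + EMOT.Phi η (-(B i k)) (z0.2.2.1 i k)
        + EMOT.Phi η (u - A i k + B i k) (z0.2.2.2.1 i k))) = 0 := by
      refine Finset.sum_eq_zero fun i _ => Finset.sum_eq_zero fun k _ => ?_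
      rw [EMOT.Phi_zero hη _ _ (hSx i k), EMOT.Phi_zero hη _ _ (hTx i k),
        EMOT.Phi_zero hη _ _ (hEx i k)]
      ring
    have t3 : EMOT.Phi η u z0.2.2.2.2 = 0 := EMOT.Phi_zero hη _ _ hqx
    rw [t1, t2, t3]
    ring
  -- memberships and bounds
  have hmemSp : EMOT.pObj η C z0.1 z0.2.1 z0.2.2.1 z0.2.2.2.1 z0.2.2.2.2 ∈ Sp :=
    ⟨z0.1, z0.2.1, z0.2.2.1, z0.2.2.2.1, z0.2.2.2.2,
      ⟨a1, a2, a3, a4, a5, a6, a7, a8, a9, a10⟩, rfl⟩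
  have hmemSd : dualF η ε C V W r c x y A B u ∈ Sd := ⟨x, y, A, B, u, rfl⟩
  have hSpne : Sp.Nonempty := ⟨_, hmemSp⟩
  have hSdne : Sd.Nonempty := ⟨_, hmemSd⟩
  have hweak' : ∀ zD ∈ Sd, ∀ zP ∈ Sp, zD ≤ zP := by
    rintro zD ⟨x', y', A', B', u', rfl⟩ zP ⟨P', S', T', E', q', hF', rfl⟩
    exact weak P' S' T' E' q' hF' x' y' A' B' u'
  have hBddB : BddBelow Sp := ⟨dualF η ε C V W r c x y A B u, fun zP hzP =>
    hweak' _ hmemSd _ hzP⟩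
  have hBddA : BddAbove Sd := ⟨EMOT.pObj η C z0.1 z0.2.1 z0.2.2.1 z0.2.2.2.1 z0.2.2.2.2,
    fun zD hzD => hweak' _ hzD _ hmemSp⟩
  refine le_antisymm ?_ ?_
  · calc sInf Sp ≤ EMOT.pObj η C z0.1 z0.2.1 z0.2.2.1 z0.2.2.2.1 z0.2.2.2.2 :=
          csInf_le hBddB hmemSp
      _ = dualF η ε C V W r c x y A B u := by linarith [hgap0]
      _ ≤ sSup Sd := le_csSup hBddA hmemSd
  · exact csSup_le hSdne fun zD hzD => le_csInf hSpne fun zP hzP => hweak' _ hzD _ hzP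


end
end

section
/- Let n, d be positive integers, η > 0, ε > 0, C ∈ ℝ^{n×n}, V, W ∈ ℝ^{n×d}, r ∈ ℝⁿ, and c ∈ ℝⁿ with all entries cⱼ > 0. Fix x ∈ ℝⁿ, A, B ∈ ℝ^{n×d}, u ∈ ℝ, and for y ∈ ℝⁿ let P(y) be the intermediate transport plan with entries p_{ij}(y) = exp(η(−c_{ij} + Σ_{k∈[d]}(a_{ik}+b_{ik})v_{jk} + xᵢ + yⱼ) − 1). Then: (i) for the dual potential f, ∂f/∂yⱼ = cⱼ − Σᵢ p_{ij}(y) for all j; (ii) for any y, the update y'ⱼ = yⱼ + (log cⱼ − log Σᵢ p_{ij}(y))/η produces a plan with exact column marginals, i.e. Σᵢ p_{ij}(y') = cⱼ for all j; and (iii) y' is the unique maximizer of the function y ↦ f(x,y,A,B,u). -/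
open Matrix

noncomputable section

/-- The intermediate transport plan associated with dual variables `(x, y, A, B, u)`. -/
def planP {n d : ℕ} (η : ℝ) (C : Matrix (Fin n) (Fin n) ℝ)
    (V : Matrix (Fin n) (Fin d) ℝ) (x y : Fin n → ℝ)
    (A B : Matrix (Fin n) (Fin d) ℝ) : Matrix (Fin n) (Fin n) ℝ :=
  fun i j => Real.exp (η * (-(C i j) + (∑ k, (A i k + B i k) * V j k) + x i + y j) - 1)

/-- The `y`-independent part of the plan entries. -/
def Ee {n d : ℕ} (η : ℝ) (C : Matrix (Fin n) (Fin n) ℝ)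
    (V : Matrix (Fin n) (Fin d) ℝ) (x : Fin n → ℝ)
    (A B : Matrix (Fin n) (Fin d) ℝ) : Matrix (Fin n) (Fin n) ℝ :=
  fun i j => Real.exp (η * (-(C i j) + (∑ k, (A i k + B i k) * V j k) + x i) - 1)

/-- The `y`-independent part of the dual potential. -/
def Rconst {n d : ℕ} (η ε : ℝ) (W : Matrix (Fin n) (Fin d) ℝ) (r : Fin n → ℝ)
    (x : Fin n → ℝ) (A B : Matrix (Fin n) (Fin d) ℝ) (u : ℝ) : ℝ :=
  ∑ i, x i * r i + ∑ i, ∑ k, (A i k + B i k) * W i k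
  + ε * u - (1 / η) * Real.exp (η * u - 1)
  - (1 / η) * ∑ i, ∑ k,
      (Real.exp (η * A i k - 1) + Real.exp (-(η * B i k) - 1)
        + Real.exp (η * (u - A i k + B i k) - 1))

lemma planP_eq {n d : ℕ} (η : ℝ) (C : Matrix (Fin n) (Fin n) ℝ)
    (V : Matrix (Fin n) (Fin d) ℝ) (x y : Fin n → ℝ)
    (A B : Matrix (Fin n) (Fin d) ℝ) (i j : Fin n) :
    planP η C V x y A B i j = Ee η C V x A B i j * Real.exp (η * y j) := by
  unfold planP Ee
  rw [← Real.exp_add]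
  congr 1
  ring

lemma sum_planP {n d : ℕ} (η : ℝ) (C : Matrix (Fin n) (Fin n) ℝ)
    (V : Matrix (Fin n) (Fin d) ℝ) (x y : Fin n → ℝ)
    (A B : Matrix (Fin n) (Fin d) ℝ) (j : Fin n) :
    ∑ i, planP η C V x y A B i j
      = (∑ i, Ee η C V x A B i j) * Real.exp (η * y j) := by
  rw [Finset.sum_mul]
  exact Finset.sum_congr rfl fun i _ => planP_eq η C V x y A B i j

lemma dualF_decomp {n d : ℕ} (η ε : ℝ) (C : Matrix (Fin n) (Fin n) ℝ)
    (V W : Matrix (Fin n) (Fin d) ℝ) (r c : Fin n → ℝ)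
    (x y : Fin n → ℝ) (A B : Matrix (Fin n) (Fin d) ℝ) (u : ℝ) :
    dualF η ε C V W r c x y A B u
      = (∑ j, (-(1 / η) * ((∑ i, Ee η C V x A B i j) * Real.exp (η * y j))
          + y j * c j)) + Rconst η ε W r x A B u := by
  have h1 : ∀ i j : Fin n,
      Real.exp (η * (-(C i j) + (∑ k, (A i k + B i k) * V j k) + x i + y j) - 1)
        = Ee η C V x A B i j * Real.exp (η * y j) := by
    intro i j
    unfold Ee
    rw [← Real.exp_add]
    congr 1
    ring
  have key : (∑ j, (-(1 / η) * ((∑ i, Ee η C V x A B i j) * Real.exp (η * y j))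
        + y j * c j))
      = -(1 / η) * (∑ i, ∑ j, Ee η C V x A B i j * Real.exp (η * y j))
        + ∑ j, y j * c j := by
    rw [Finset.sum_add_distrib]
    congr 1
    rw [← Finset.mul_sum]
    congr 1
    conv_rhs => rw [Finset.sum_comm]
    exact Finset.sum_congr rfl fun j _ => Finset.sum_mul _ _ _
  unfold dualF Rconst
  simp only [h1]
  rw [key]
  ring

lemma key_le {η S cc t ts : ℝ} (hη : 0 < η) (hS : 0 < S) (hcc : 0 < cc)
    (hts : S * Real.exp (η * ts) = cc) :
    -(1 / η) * (S * Real.exp (η * t)) + t * cc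
      ≤ -(1 / η) * (S * Real.exp (η * ts)) + ts * cc := by
  have he : S * Real.exp (η * t) = cc * Real.exp (η * (t - ts)) := by
    rw [← hts, mul_assoc, ← Real.exp_add]
    congr 2
    ring
  have h1 : η * (t - ts) + 1 ≤ Real.exp (η * (t - ts)) := Real.add_one_le_exp _
  have h2 : cc * (η * (t - ts) + 1) ≤ S * Real.exp (η * t) := by
    rw [he]
    exact mul_le_mul_of_nonneg_left h1 hcc.le
  have h4 : (1 / η) * (cc * (η * (t - ts) + 1)) ≤ (1 / η) * (S * Real.exp (η * t)) :=
    mul_le_mul_of_nonneg_left h2 (by positivity)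
  have h5 : (1 / η) * (cc * (η * (t - ts) + 1)) = cc * (t - ts) + (1 / η) * cc := by
    field_simp
  rw [hts]
  nlinarith [h4, h5]

lemma key_lt {η S cc t ts : ℝ} (hη : 0 < η) (hS : 0 < S) (hcc : 0 < cc)
    (hts : S * Real.exp (η * ts) = cc) (hne : t ≠ ts) :
    -(1 / η) * (S * Real.exp (η * t)) + t * cc
      < -(1 / η) * (S * Real.exp (η * ts)) + ts * cc := by
  have he : S * Real.exp (η * t) = cc * Real.exp (η * (t - ts)) := by
    rw [← hts, mul_assoc, ← Real.exp_add]
    congr 2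
    ring
  have hz : η * (t - ts) ≠ 0 := mul_ne_zero hη.ne' (sub_ne_zero.mpr hne)
  have h1 : η * (t - ts) + 1 < Real.exp (η * (t - ts)) := Real.add_one_lt_exp hz
  have h2 : cc * (η * (t - ts) + 1) < S * Real.exp (η * t) := by
    rw [he]
    exact mul_lt_mul_of_pos_left h1 hcc
  have h4 : (1 / η) * (cc * (η * (t - ts) + 1)) < (1 / η) * (S * Real.exp (η * t)) :=
    mul_lt_mul_of_pos_left h2 (by positivity)
  have h5 : (1 / η) * (cc * (η * (t - ts) + 1)) = cc * (t - ts) + (1 / η) * cc := by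
    field_simp
  rw [hts]
  nlinarith [h4, h5]

theorem stmt13 (n d : ℕ) (hn : 0 < n) (hd : 0 < d)
    (η ε : ℝ) (hη : 0 < η) (hε : 0 < ε)
    (C : Matrix (Fin n) (Fin n) ℝ) (V W : Matrix (Fin n) (Fin d) ℝ)
    (r : Fin n → ℝ) (c : Fin n → ℝ) (hc : ∀ j, 0 < c j)
    (x : Fin n → ℝ) (A B : Matrix (Fin n) (Fin d) ℝ) (u : ℝ)
    (y : Fin n → ℝ) (y' : Fin n → ℝ)
    (hy' : ∀ j, y' j = y j +
      (Real.log (c j) - Real.log (∑ i, planP η C V x y A B i j)) / η) :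
    (∀ j, deriv (fun t : ℝ =>
        dualF η ε C V W r c x (Function.update y j t) A B u) (y j)
      = c j - ∑ i, planP η C V x y A B i j) ∧
    (∀ j, ∑ i, planP η C V x y' A B i j = c j) ∧
    (∀ y₂ : Fin n → ℝ,
      dualF η ε C V W r c x y₂ A B u ≤ dualF η ε C V W r c x y' A B u) ∧
    (∀ y₂ : Fin n → ℝ,
      dualF η ε C V W r c x y₂ A B u = dualF η ε C V W r c x y' A B u → y₂ = y') := by
  have hne : Nonempty (Fin n) := ⟨⟨0, hn⟩⟩
  have hSpos : ∀ j, 0 < ∑ i, Ee η C V x A B i j := fun j =>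
    Finset.sum_pos (fun i _ => Real.exp_pos _) Finset.univ_nonempty
  -- the key identity for y'
  have hy'' : ∀ j, η * y' j
      = Real.log (c j) - Real.log (∑ i, Ee η C V x A B i j) := by
    intro j
    rw [hy' j, sum_planP, Real.log_mul (hSpos j).ne' (Real.exp_pos _).ne',
      Real.log_exp]
    field_simp
    ring
  have hSexp : ∀ j, (∑ i, Ee η C V x A B i j) * Real.exp (η * y' j) = c j := by
    intro j
    rw [hy'' j, Real.exp_sub, Real.exp_log (hc j), Real.exp_log (hSpos j),
      mul_comm, div_mul_cancel₀ _ (hSpos j).ne']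
  refine ⟨?_, ?_, ?_, ?_⟩
  · -- derivative
    intro j
    set S := ∑ i, Ee η C V x A B i j with hSdef
    have hfun : (fun t : ℝ => dualF η ε C V W r c x (Function.update y j t) A B u)
        = fun t : ℝ => (-(1 / η) * (S * Real.exp (η * t)) + t * c j)
            + ((∑ j' ∈ Finset.univ.erase j,
                (-(1 / η) * ((∑ i, Ee η C V x A B i j') * Real.exp (η * y j'))
                  + y j' * c j'))
              + Rconst η ε W r x A B u) := by
      funext t
      rw [dualF_decomp,
        ← Finset.add_sum_erase _
          (fun j' => -(1 / η) * ((∑ i, Ee η C V x A B i j')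
            * Real.exp (η * Function.update y j t j'))
            + Function.update y j t j' * c j') (Finset.mem_univ j)]
      have hsum : ∑ j' ∈ Finset.univ.erase j,
          (-(1 / η) * ((∑ i, Ee η C V x A B i j')
            * Real.exp (η * Function.update y j t j'))
            + Function.update y j t j' * c j')
          = ∑ j' ∈ Finset.univ.erase j,
            (-(1 / η) * ((∑ i, Ee η C V x A B i j') * Real.exp (η * y j'))
              + y j' * c j') :=
        Finset.sum_congr rfl fun j' hj' => by
          rw [Function.update_of_ne (Finset.ne_of_mem_erase hj')]
      rw [hsum, Function.update_self]
      ring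
    have hD : HasDerivAt
        (fun t : ℝ => (-(1 / η) * (S * Real.exp (η * t)) + t * c j)
            + ((∑ j' ∈ Finset.univ.erase j,
                (-(1 / η) * ((∑ i, Ee η C V x A B i j') * Real.exp (η * y j'))
                  + y j' * c j'))
              + Rconst η ε W r x A B u))
        (c j - S * Real.exp (η * y j)) (y j) := by
      have h1 : HasDerivAt (fun t : ℝ => Real.exp (η * t))
          (Real.exp (η * y j) * η) (y j) := by
        have := ((hasDerivAt_id (y j)).const_mul η).exp
        simpa using this
      have h2 := ((h1.const_mul S).const_mul (-(1 / η))).add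
        ((hasDerivAt_id (y j)).mul_const (c j))
      have h3 := h2.add_const
        ((∑ j' ∈ Finset.univ.erase j,
            (-(1 / η) * ((∑ i, Ee η C V x A B i j') * Real.exp (η * y j'))
              + y j' * c j'))
          + Rconst η ε W r x A B u)
      refine h3.congr_deriv ?_
      linear_combination (-(S * Real.exp (η * y j))) * (inv_mul_cancel₀ hη.ne')
    rw [hfun, sum_planP]
    exact hD.deriv
  · -- exact column marginals
    intro j
    rw [sum_planP]
    exact hSexp j
  · -- maximality
    intro y₂
    rw [dualF_decomp, dualF_decomp]
    exact add_le_add_left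
      (Finset.sum_le_sum fun j _ => key_le hη (hSpos j) (hc j) (hSexp j)) _
  · -- uniqueness
    intro y₂ heq
    by_contra hneq
    have hj : ∃ j, y₂ j ≠ y' j := by
      by_contra h
      push_neg at h
      exact hneq (funext h)
    obtain ⟨j0, hj0⟩ := hj
    rw [dualF_decomp, dualF_decomp] at heq
    have hlt : (∑ j, (-(1 / η) * ((∑ i, Ee η C V x A B i j)
          * Real.exp (η * y₂ j)) + y₂ j * c j))
        < ∑ j, (-(1 / η) * ((∑ i, Ee η C V x A B i j)
          * Real.exp (η * y' j)) + y' j * c j) :=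
      Finset.sum_lt_sum
        (fun j _ => key_le hη (hSpos j) (hc j) (hSexp j))
        ⟨j0, Finset.mem_univ _, key_lt hη (hSpos j0) (hc j0) (hSexp j0) hj0⟩
    linarith

end
end

section
/- Let n, d be positive integers, η > 0, C ∈ ℝ^{n×n}, V, W ∈ ℝ^{n×d}, r, c ∈ ℝⁿ. Suppose there exists P ∈ ℝ^{n×n} with all entries strictly positive such that P𝟏 = r, Pᵀ𝟏 = c and PV − W has all entries strictly positive. Then strong duality holds for the entropic super-martingale optimal transport problem: inf { C·P + (1/η)H(P, PV − W) : P ∈ ℝ^{n×n}, P ≥ 0, P𝟏 = r, Pᵀ𝟏 = c, PV ≥ W } = sup_{(x,y,A) ∈ ℝⁿ×ℝⁿ×ℝ^{n×d}} g(x,y,A). -/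
open Matrix Finset Topology

noncomputable section

/-- The dual potential of the entropic super-martingale optimal transport problem. -/
def dualG {n d : ℕ} (η : ℝ) (C : Matrix (Fin n) (Fin n) ℝ)
    (V W : Matrix (Fin n) (Fin d) ℝ) (r c : Fin n → ℝ)
    (x y : Fin n → ℝ) (A : Matrix (Fin n) (Fin d) ℝ) : ℝ :=
  -(1 / η) * ∑ i, ∑ j,
      Real.exp (η * (-(C i j) + (∑ k, A i k * V j k) + x i + y j) - 1)
  + ∑ i, x i * r i + ∑ j, y j * c j
  + ∑ i, ∑ k, A i k * W i k
  - (1 / η) * ∑ i, ∑ k, Real.exp (-(η * A i k) - 1)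

lemma ent_zero' : ent 0 = 0 := by simp [ent]

lemma fenchel {η : ℝ} (hη : 0 < η) {p : ℝ} (hp : 0 ≤ p) (a : ℝ) :
    a * p - (1/η) * Real.exp (η * a - 1) ≤ (1/η) * ent p := by
  have hηinv : 0 < 1/η := by positivity
  rcases eq_or_lt_of_le hp with h | h
  · rw [← h, ent_zero']
    have := Real.exp_pos (η * a - 1)
    nlinarith
  · have key : (η * a - 1 - Real.log p) + 1 ≤ Real.exp (η * a - 1 - Real.log p) :=
      Real.add_one_le_exp _
    have hep : Real.exp (η * a - 1 - Real.log p) = Real.exp (η * a - 1) / p := by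
      rw [Real.exp_sub, Real.exp_log h]
    rw [hep] at key
    have h2 : p * (η * a - Real.log p) ≤ Real.exp (η * a - 1) := by
      have h3 := mul_le_mul_of_nonneg_left key h.le
      rw [mul_div_cancel₀ _ (ne_of_gt h)] at h3
      nlinarith
    have h4 := mul_le_mul_of_nonneg_left h2 hηinv.le
    have h5 : (1/η) * (p * (η * a - Real.log p)) = a * p - (1/η) * (p * Real.log p) := by
      field_simp
    rw [h5] at h4
    rw [ent]
    linarith

lemma exists_small_t {ι : Type*} [Fintype ι] [DecidableEq ι] (a b : ι → ℝ) (cc : ℝ) (m₀ : ι)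
    (ha : ∀ m, 0 ≤ a m) (hab : ∀ m, 0 < a m + b m) (h0 : a m₀ = 0) :
    ∃ t : ℝ, 0 < t ∧ t < 1 ∧
      (∑ m, ent (a m + t * b m)) + t * cc < ∑ m, ent (a m) := by
  have hb₀ : 0 < b m₀ := by have := hab m₀; rw [h0] at this; simpa using this
  set K' : ℝ := ∑ m, |ent (a m + b m) - ent (a m)| with hK'
  set t : ℝ := min (1/2) (Real.exp (-(cc + K' + 1) / b m₀)) with htdef
  have ht0 : 0 < t := lt_min (by norm_num) (Real.exp_pos _)
  have ht1 : t < 1 := lt_of_le_of_lt (min_le_left _ _) (by norm_num)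
  refine ⟨t, ht0, ht1, ?_⟩
  have hlogt : b m₀ * Real.log t ≤ -(cc + K' + 1) := by
    have h1 : Real.log t ≤ -(cc + K' + 1) / b m₀ := by
      calc Real.log t ≤ Real.log (Real.exp (-(cc + K' + 1) / b m₀)) :=
            Real.log_le_log ht0 (min_le_right _ _)
        _ = -(cc + K' + 1) / b m₀ := Real.log_exp _
    have h2 := mul_le_mul_of_nonneg_left h1 hb₀.le
    rwa [mul_div_cancel₀ _ (ne_of_gt hb₀)] at h2
  -- pointwise bound
  have hmain : ∀ m, ent (a m + t * b m) ≤ ent (a m) + t * |ent (a m + b m) - ent (a m)|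
      + (if m = m₀ then t * (b m₀ * Real.log t) else 0) := by
    intro m
    by_cases hm : m = m₀
    · subst hm
      rw [if_pos rfl]
      have h1 : ent (a m + t * b m) = t * ent (b m) + t * (b m * Real.log t) := by
        rw [h0, zero_add, ent, ent, Real.log_mul (ne_of_gt ht0) (ne_of_gt hb₀)]; ring
      have h2 : ent (b m) ≤ |ent (a m + b m) - ent (a m)| := by
        rw [h0, zero_add, ent_zero', sub_zero]; exact le_abs_self _
      have h3 : ent (a m) = 0 := by rw [h0, ent_zero']
      rw [h1]
      nlinarith [h3, mul_le_mul_of_nonneg_left h2 ht0.le]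
    · rw [if_neg hm, add_zero]
      have hcx := Real.convexOn_mul_log.2 (Set.mem_Ici.mpr (ha m))
        (Set.mem_Ici.mpr (hab m).le) (by linarith : (0:ℝ) ≤ 1 - t) ht0.le (by ring)
      have he : (1 - t) • a m + t • (a m + b m) = a m + t * b m := by
        simp only [smul_eq_mul]; ring
      rw [he] at hcx
      have h3 : ent (a m + t * b m) ≤ (1 - t) * ent (a m) + t * ent (a m + b m) := by
        simpa [ent, smul_eq_mul] using hcx
      have h4 : ent (a m + b m) - ent (a m) ≤ |ent (a m + b m) - ent (a m)| := le_abs_self _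
      nlinarith [mul_le_mul_of_nonneg_left h4 ht0.le]
  have hsum := Finset.sum_le_sum (fun m (_ : m ∈ univ) => hmain m)
  rw [Finset.sum_add_distrib, Finset.sum_add_distrib, Finset.sum_ite_eq' univ m₀
    (fun _ => t * (b m₀ * Real.log t)), if_pos (mem_univ m₀), ← Finset.mul_sum, ← hK'] at hsum
  have hfin : t * K' + t * (b m₀ * Real.log t) + t * cc < 0 := by
    have := mul_le_mul_of_nonneg_left hlogt ht0.le
    nlinarith
  linarith

def Sm {n d : ℕ} (V W : Matrix (Fin n) (Fin d) ℝ) (P : Fin n → Fin n → ℝ)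
    (i : Fin n) (k : Fin d) : ℝ := (∑ j, P i j * V j k) - W i k

def fObj {n d : ℕ} (η : ℝ) (C : Matrix (Fin n) (Fin n) ℝ)
    (V W : Matrix (Fin n) (Fin d) ℝ) (P : Fin n → Fin n → ℝ) : ℝ :=
  (∑ i, ∑ j, C i j * P i j) +
    (1 / η) * ((∑ i, ∑ j, ent (P i j)) + ∑ i, ∑ k, ent (Sm V W P i k))

def KSet {n d : ℕ} (V W : Matrix (Fin n) (Fin d) ℝ) (r c : Fin n → ℝ) :
    Set (Fin n → Fin n → ℝ) :=
  {P | (∀ i j, 0 ≤ P i j) ∧ (∀ i, ∑ j, P i j = r i) ∧ (∀ j, ∑ i, P i j = c j) ∧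
    ∀ i k, 0 ≤ Sm V W P i k}

lemma sum_rearrange {n d : ℕ} (C : Matrix (Fin n) (Fin n) ℝ) (V : Matrix (Fin n) (Fin d) ℝ)
    (r c : Fin n → ℝ) (P : Fin n → Fin n → ℝ)
    (hr : ∀ i, ∑ j, P i j = r i) (hc : ∀ j, ∑ i, P i j = c j)
    (x y : Fin n → ℝ) (A : Matrix (Fin n) (Fin d) ℝ) :
    ∑ i, ∑ j, P i j * (-(C i j) + (∑ k, A i k * V j k) + x i + y j)
      = -(∑ i, ∑ j, C i j * P i j) + (∑ i, ∑ k, A i k * (∑ j, P i j * V j k))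
        + ∑ i, x i * r i + ∑ j, y j * c j := by
  have h1 : ∀ i j, P i j * (-(C i j) + (∑ k, A i k * V j k) + x i + y j)
      = -(C i j * P i j) + (∑ k, A i k * (P i j * V j k)) + x i * P i j + y j * P i j := by
    intro i j
    have h2 : P i j * (∑ k, A i k * V j k) = ∑ k, A i k * (P i j * V j k) := by
      rw [Finset.mul_sum]; exact Finset.sum_congr rfl fun k _ => by ring
    calc P i j * (-(C i j) + (∑ k, A i k * V j k) + x i + y j)
        = -(C i j * P i j) + P i j * (∑ k, A i k * V j k) + x i * P i j + y j * P i j := by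
          ring
      _ = _ := by rw [h2]
  have e2 : ∀ i, (∑ j, ∑ k, A i k * (P i j * V j k)) = ∑ k, A i k * (∑ j, P i j * V j k) := by
    intro i
    rw [Finset.sum_comm]
    exact Finset.sum_congr rfl fun k _ => by rw [Finset.mul_sum]
  have e3 : ∀ i, (∑ j, x i * P i j) = x i * r i := by
    intro i; rw [← Finset.mul_sum, hr]
  have e4 : (∑ i, ∑ j, y j * P i j) = ∑ j, y j * c j := by
    rw [Finset.sum_comm]
    exact Finset.sum_congr rfl fun j _ => by rw [← Finset.mul_sum, hc]
  calc ∑ i, ∑ j, P i j * (-(C i j) + (∑ k, A i k * V j k) + x i + y j)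
      = ∑ i, ∑ j, (-(C i j * P i j) + (∑ k, A i k * (P i j * V j k))
          + x i * P i j + y j * P i j) :=
        Finset.sum_congr rfl fun i _ => Finset.sum_congr rfl fun j _ => h1 i j
    _ = (∑ i, ∑ j, -(C i j * P i j)) + (∑ i, ∑ j, ∑ k, A i k * (P i j * V j k))
          + (∑ i, ∑ j, x i * P i j) + (∑ i, ∑ j, y j * P i j) := by
        simp [Finset.sum_add_distrib]
    _ = _ := by
        simp only [e2, e3, e4, Finset.sum_neg_distrib]

lemma weak_duality {n d : ℕ} {η : ℝ} (hη : 0 < η) (C : Matrix (Fin n) (Fin n) ℝ)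
    (V W : Matrix (Fin n) (Fin d) ℝ) (r c : Fin n → ℝ) (P : Fin n → Fin n → ℝ)
    (hP0 : ∀ i j, 0 ≤ P i j) (hr : ∀ i, ∑ j, P i j = r i) (hc : ∀ j, ∑ i, P i j = c j)
    (hS0 : ∀ i k, 0 ≤ Sm V W P i k) (x y : Fin n → ℝ) (A : Matrix (Fin n) (Fin d) ℝ) :
    dualG η C V W r c x y A ≤ fObj η C V W P := by
  have hηinv : (0:ℝ) < 1/η := by positivity
  set a : Fin n → Fin n → ℝ := fun i j => -(C i j) + (∑ k, A i k * V j k) + x i + y j with hadef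
  -- Fenchel on the P block
  have h1 : ∀ i j, a i j * P i j - (1/η) * Real.exp (η * a i j - 1) ≤ (1/η) * ent (P i j) :=
    fun i j => fenchel hη (hP0 i j) _
  have hsum1 : (∑ i, ∑ j, a i j * P i j) - (1/η) * (∑ i, ∑ j, Real.exp (η * a i j - 1))
      ≤ (1/η) * ∑ i, ∑ j, ent (P i j) := by
    have h := Finset.sum_le_sum fun i (_ : i ∈ univ) =>
      Finset.sum_le_sum fun j (_ : j ∈ univ) => h1 i j
    calc (∑ i, ∑ j, a i j * P i j) - (1/η) * (∑ i, ∑ j, Real.exp (η * a i j - 1))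
        = ∑ i, ∑ j, (a i j * P i j - (1/η) * Real.exp (η * a i j - 1)) := by
          simp [Finset.sum_sub_distrib, Finset.mul_sum]
      _ ≤ ∑ i, ∑ j, (1/η) * ent (P i j) := h
      _ = (1/η) * ∑ i, ∑ j, ent (P i j) := by simp [Finset.mul_sum]
  -- Fenchel on the S block
  have h2 : ∀ (i : Fin n) (k : Fin d),
      (-(A i k)) * Sm V W P i k - (1/η) * Real.exp (-(η * A i k) - 1)
        ≤ (1/η) * ent (Sm V W P i k) := by
    intro i k
    have := fenchel hη (hS0 i k) (-(A i k))
    have he : η * (-(A i k)) - 1 = -(η * A i k) - 1 := by ring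
    rwa [he] at this
  have hsum2 : (∑ i, ∑ k, (-(A i k)) * Sm V W P i k)
      - (1/η) * (∑ i, ∑ k, Real.exp (-(η * A i k) - 1))
      ≤ (1/η) * ∑ i, ∑ k, ent (Sm V W P i k) := by
    have h := Finset.sum_le_sum fun i (_ : i ∈ univ) =>
      Finset.sum_le_sum fun k (_ : k ∈ univ) => h2 i k
    calc (∑ i, ∑ k, (-(A i k)) * Sm V W P i k)
          - (1/η) * (∑ i, ∑ k, Real.exp (-(η * A i k) - 1))
        = ∑ i, ∑ k, ((-(A i k)) * Sm V W P i k - (1/η) * Real.exp (-(η * A i k) - 1)) := by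
          simp [Finset.sum_sub_distrib, Finset.mul_sum]
      _ ≤ ∑ i, ∑ k, (1/η) * ent (Sm V W P i k) := h
      _ = (1/η) * ∑ i, ∑ k, ent (Sm V W P i k) := by simp [Finset.mul_sum]
  -- rearrangements
  have hre : (∑ i, ∑ j, a i j * P i j)
      = -(∑ i, ∑ j, C i j * P i j) + (∑ i, ∑ k, A i k * (∑ j, P i j * V j k))
        + ∑ i, x i * r i + ∑ j, y j * c j := by
    rw [show (∑ i, ∑ j, a i j * P i j) = ∑ i, ∑ j, P i j * a i j from
      Finset.sum_congr rfl fun i _ => Finset.sum_congr rfl fun j _ => mul_comm _ _]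
    exact sum_rearrange C V r c P hr hc x y A
  have hAS : (∑ i, ∑ k, (-(A i k)) * Sm V W P i k)
      = -(∑ i, ∑ k, A i k * (∑ j, P i j * V j k)) + ∑ i, ∑ k, A i k * W i k := by
    simp only [Sm, neg_mul, mul_sub, Finset.sum_sub_distrib, Finset.sum_neg_distrib]
    ring
  have hgoal : dualG η C V W r c x y A
      = -(1/η) * (∑ i, ∑ j, Real.exp (η * a i j - 1)) + ∑ i, x i * r i + ∑ j, y j * c j
        + (∑ i, ∑ k, A i k * W i k) - (1/η) * ∑ i, ∑ k, Real.exp (-(η * A i k) - 1) := rfl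
  rw [hgoal, fObj]
  linarith [hsum1, hsum2, hre, hAS]

lemma hasDerivAt_ent_affine {α β : ℝ} (hα : α ≠ 0) :
    HasDerivAt (fun t : ℝ => ent (α + t * β)) ((Real.log α + 1) * β) 0 := by
  have h1 : HasDerivAt (fun t : ℝ => α + t * β) β 0 := by
    simpa using ((hasDerivAt_id (0:ℝ)).mul_const β).const_add α
  have h2 : HasDerivAt (fun x : ℝ => x * Real.log x) (Real.log α + 1) (α + 0 * β) := by
    simpa using Real.hasDerivAt_mul_log hα
  have h3 := h2.comp 0 h1
  simpa [ent, Function.comp_def] using h3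

lemma Sm_add_smul {n d : ℕ} (V W : Matrix (Fin n) (Fin d) ℝ) (P D : Fin n → Fin n → ℝ)
    (t : ℝ) (i : Fin n) (k : Fin d) :
    Sm V W (fun i j => P i j + t * D i j) i k = Sm V W P i k + t * ∑ j, D i j * V j k := by
  simp only [Sm]
  have h : (∑ j, (P i j + t * D i j) * V j k)
      = (∑ j, P i j * V j k) + t * ∑ j, D i j * V j k := by
    rw [Finset.mul_sum, ← Finset.sum_add_distrib]
    exact Finset.sum_congr rfl fun j _ => by ring
  rw [h]; ring

lemma fObj_continuous {n d : ℕ} (η : ℝ) (C : Matrix (Fin n) (Fin n) ℝ)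
    (V W : Matrix (Fin n) (Fin d) ℝ) : Continuous (fObj η C V W) := by
  have hcoord : ∀ (i j : Fin n), Continuous fun P : Fin n → Fin n → ℝ => P i j :=
    fun i j => (continuous_apply j).comp (continuous_apply i)
  have hS : ∀ (i : Fin n) (k : Fin d), Continuous fun P : Fin n → Fin n → ℝ => Sm V W P i k :=
    fun i k => Continuous.sub
      (continuous_finset_sum _ fun j _ => (hcoord i j).mul continuous_const)
      continuous_const
  have hent : ∀ {g : (Fin n → Fin n → ℝ) → ℝ}, Continuous g →
      Continuous fun P => ent (g P) := fun {g} hg => Real.continuous_mul_log.comp hg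
  apply Continuous.add
  · exact continuous_finset_sum _ fun i _ =>
      continuous_finset_sum _ fun j _ => continuous_const.mul (hcoord i j)
  · apply Continuous.mul continuous_const
    apply Continuous.add
    · exact continuous_finset_sum _ fun i _ =>
        continuous_finset_sum _ fun j _ => hent (hcoord i j)
    · exact continuous_finset_sum _ fun i _ =>
        continuous_finset_sum _ fun k _ => hent (hS i k)

lemma KSet_compact {n d : ℕ} (V W : Matrix (Fin n) (Fin d) ℝ) (r c : Fin n → ℝ)
    (hrpos : ∀ i, 0 ≤ r i) : IsCompact (KSet V W r c) := by
  have hcoord : ∀ (i j : Fin n), Continuous fun P : Fin n → Fin n → ℝ => P i j :=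
    fun i j => (continuous_apply j).comp (continuous_apply i)
  have hclosed : IsClosed (KSet V W r c) := by
    have h1 : IsClosed {P : Fin n → Fin n → ℝ | ∀ i j, 0 ≤ P i j} := by
      have : {P : Fin n → Fin n → ℝ | ∀ i j, 0 ≤ P i j}
          = ⋂ i, ⋂ j, {P | 0 ≤ P i j} := by ext P; simp [Set.mem_iInter]
      rw [this]
      exact isClosed_iInter fun i => isClosed_iInter fun j =>
        isClosed_le continuous_const (hcoord i j)
    have h2 : IsClosed {P : Fin n → Fin n → ℝ | ∀ i, ∑ j, P i j = r i} := by
      have : {P : Fin n → Fin n → ℝ | ∀ i, ∑ j, P i j = r i}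
          = ⋂ i, {P | ∑ j, P i j = r i} := by ext P; simp [Set.mem_iInter]
      rw [this]
      exact isClosed_iInter fun i =>
        isClosed_eq (continuous_finset_sum _ fun j _ => hcoord i j) continuous_const
    have h3 : IsClosed {P : Fin n → Fin n → ℝ | ∀ j, ∑ i, P i j = c j} := by
      have : {P : Fin n → Fin n → ℝ | ∀ j, ∑ i, P i j = c j}
          = ⋂ j, {P | ∑ i, P i j = c j} := by ext P; simp [Set.mem_iInter]
      rw [this]
      exact isClosed_iInter fun j =>
        isClosed_eq (continuous_finset_sum _ fun i _ => hcoord i j) continuous_const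
    have h4 : IsClosed {P : Fin n → Fin n → ℝ | ∀ i k, 0 ≤ Sm V W P i k} := by
      have : {P : Fin n → Fin n → ℝ | ∀ i k, 0 ≤ Sm V W P i k}
          = ⋂ i, ⋂ k, {P | 0 ≤ Sm V W P i k} := by ext P; simp [Set.mem_iInter]
      rw [this]
      exact isClosed_iInter fun i => isClosed_iInter fun k =>
        isClosed_le continuous_const (Continuous.sub
          (continuous_finset_sum _ fun j _ => (hcoord i j).mul continuous_const)
          continuous_const)
    have : KSet V W r c = {P : Fin n → Fin n → ℝ | ∀ i j, 0 ≤ P i j}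
        ∩ ({P | ∀ i, ∑ j, P i j = r i} ∩ ({P | ∀ j, ∑ i, P i j = c j}
          ∩ {P | ∀ i k, 0 ≤ Sm V W P i k})) := by
      ext P; simp [KSet, Set.mem_setOf_eq, and_assoc]
    rw [this]
    exact h1.inter (h2.inter (h3.inter h4))
  have hsub : KSet V W r c ⊆
      Set.Icc (fun _ _ => (0:ℝ)) (fun _ _ => ∑ i, r i) := by
    rintro P ⟨hP0, hr, _, _⟩
    constructor
    · intro i; intro j; exact hP0 i j
    · intro i; intro j
      calc P i j ≤ ∑ j', P i j' :=
            Finset.single_le_sum (fun j' _ => hP0 i j') (mem_univ j)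
        _ = r i := hr i
        _ ≤ ∑ i', r i' := Finset.single_le_sum (fun i' _ => hrpos i') (mem_univ i)
  exact IsCompact.of_isClosed_subset isCompact_Icc hclosed hsub

lemma stationary {n d : ℕ} {η : ℝ} (hη : 0 < η) (C : Matrix (Fin n) (Fin n) ℝ)
    (V W : Matrix (Fin n) (Fin d) ℝ) (r c : Fin n → ℝ) (P : Fin n → Fin n → ℝ)
    (hmin : ∀ Q ∈ KSet V W r c, fObj η C V W P ≤ fObj η C V W Q)
    (hp : ∀ i j, 0 < P i j) (hs : ∀ i k, 0 < Sm V W P i k)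
    (hr : ∀ i, ∑ j, P i j = r i) (hc : ∀ j, ∑ i, P i j = c j)
    (D : Fin n → Fin n → ℝ) (hDr : ∀ i, ∑ j, D i j = 0) (hDc : ∀ j, ∑ i, D i j = 0) :
    ∑ i, ∑ j, D i j * (C i j + (1/η) * (Real.log (P i j) + 1)
      + (1/η) * ∑ k, V j k * (Real.log (Sm V W P i k) + 1)) = 0 := by
  set E : Fin n → Fin d → ℝ := fun i k => ∑ j, D i j * V j k with hE
  set ψ : ℝ → ℝ := fun t =>
    (∑ i, ∑ j, C i j * (P i j + t * D i j)) +
      (1/η) * ((∑ i, ∑ j, ent (P i j + t * D i j))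
        + ∑ i, ∑ k, ent (Sm V W P i k + t * E i k)) with hψ
  have hψf : ∀ t, ψ t = fObj η C V W (fun i j => P i j + t * D i j) := by
    intro t
    simp only [hψ, fObj, Sm_add_smul, hE]
  have hψ0 : ψ 0 = fObj η C V W P := by
    have h : (fun i j => P i j + 0 * D i j) = P := by funext i j; ring
    rw [hψf 0, h]
  have hev : ∀ᶠ t in 𝓝 (0:ℝ), (fun i j => P i j + t * D i j) ∈ KSet V W r c := by
    have hev1 : ∀ (v w : ℝ), 0 < v → ∀ᶠ t in 𝓝 (0:ℝ), 0 < v + t * w := by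
      intro v w hv
      have hcont : ContinuousAt (fun t : ℝ => v + t * w) 0 := by fun_prop
      have h0 : (0:ℝ) < v + 0 * w := by simpa using hv
      exact hcont.eventually (eventually_gt_nhds h0)
    have hA : ∀ᶠ t in 𝓝 (0:ℝ), ∀ i j, 0 < P i j + t * D i j := by
      rw [Filter.eventually_all]; intro i
      rw [Filter.eventually_all]; intro j
      exact hev1 _ _ (hp i j)
    have hB : ∀ᶠ t in 𝓝 (0:ℝ), ∀ i k, 0 < Sm V W P i k + t * E i k := by
      rw [Filter.eventually_all]; intro i
      rw [Filter.eventually_all]; intro k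
      exact hev1 _ _ (hs i k)
    filter_upwards [hA, hB] with t hA' hB'
    refine ⟨fun i j => (hA' i j).le, ?_, ?_, fun i k => ?_⟩
    · intro i
      have h : ∑ j, (P i j + t * D i j) = (∑ j, P i j) + t * ∑ j, D i j := by
        rw [Finset.mul_sum, ← Finset.sum_add_distrib]
      rw [h, hr, hDr, mul_zero, add_zero]
    · intro j
      have h : ∑ i, (P i j + t * D i j) = (∑ i, P i j) + t * ∑ i, D i j := by
        rw [Finset.mul_sum, ← Finset.sum_add_distrib]
      rw [h, hc, hDc, mul_zero, add_zero]
    · rw [Sm_add_smul]; exact (hB' i k).le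
  have hloc : IsLocalMin ψ 0 := by
    refine Filter.Eventually.mono hev fun t ht => ?_
    rw [hψ0, hψf t]
    exact hmin _ ht
  have hder : HasDerivAt ψ
      ((∑ i, ∑ j, C i j * D i j) +
        (1/η) * ((∑ i, ∑ j, (Real.log (P i j) + 1) * D i j)
          + ∑ i, ∑ k, (Real.log (Sm V W P i k) + 1) * E i k)) 0 := by
    have hlin : HasDerivAt (fun t : ℝ => ∑ i, ∑ j, C i j * (P i j + t * D i j))
        (∑ i, ∑ j, C i j * D i j) 0 := by
      apply HasDerivAt.fun_sum; intro i _
      apply HasDerivAt.fun_sum; intro j _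
      have h1 : HasDerivAt (fun t : ℝ => P i j + t * D i j) (D i j) 0 := by
        simpa using ((hasDerivAt_id (0:ℝ)).mul_const (D i j)).const_add (P i j)
      exact h1.const_mul (C i j)
    have hentP : HasDerivAt (fun t : ℝ => ∑ i, ∑ j, ent (P i j + t * D i j))
        (∑ i, ∑ j, (Real.log (P i j) + 1) * D i j) 0 := by
      apply HasDerivAt.fun_sum; intro i _
      apply HasDerivAt.fun_sum; intro j _
      exact hasDerivAt_ent_affine (ne_of_gt (hp i j))
    have hentS : HasDerivAt (fun t : ℝ => ∑ i, ∑ k, ent (Sm V W P i k + t * E i k))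
        (∑ i, ∑ k, (Real.log (Sm V W P i k) + 1) * E i k) 0 := by
      apply HasDerivAt.fun_sum; intro i _
      apply HasDerivAt.fun_sum; intro k _
      exact hasDerivAt_ent_affine (ne_of_gt (hs i k))
    exact hlin.add ((hentP.add hentS).const_mul (1/η))
  have hzero := hloc.hasDerivAt_eq_zero hder
  -- algebra: the goal sum equals the derivative
  have hsplit : ∀ (i j : Fin n), D i j * (C i j + (1/η) * (Real.log (P i j) + 1)
      + (1/η) * ∑ k, V j k * (Real.log (Sm V W P i k) + 1))
      = C i j * D i j + (1/η) * ((Real.log (P i j) + 1) * D i j)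
        + (1/η) * ∑ k, D i j * (V j k * (Real.log (Sm V W P i k) + 1)) := by
    intro i j
    calc D i j * (C i j + (1/η) * (Real.log (P i j) + 1)
          + (1/η) * ∑ k, V j k * (Real.log (Sm V W P i k) + 1))
        = C i j * D i j + (1/η) * ((Real.log (P i j) + 1) * D i j)
          + (1/η) * (D i j * ∑ k, V j k * (Real.log (Sm V W P i k) + 1)) := by ring
      _ = _ := by rw [Finset.mul_sum]
  have hswap : ∀ i, (∑ j, ∑ k, D i j * (V j k * (Real.log (Sm V W P i k) + 1)))
      = ∑ k, (Real.log (Sm V W P i k) + 1) * E i k := by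
    intro i
    rw [Finset.sum_comm]
    refine Finset.sum_congr rfl fun k _ => ?_
    rw [hE, Finset.mul_sum]
    exact Finset.sum_congr rfl fun j _ => by ring
  calc ∑ i, ∑ j, D i j * (C i j + (1/η) * (Real.log (P i j) + 1)
        + (1/η) * ∑ k, V j k * (Real.log (Sm V W P i k) + 1))
      = ∑ i, ∑ j, (C i j * D i j + (1/η) * ((Real.log (P i j) + 1) * D i j)
          + (1/η) * ∑ k, D i j * (V j k * (Real.log (Sm V W P i k) + 1))) :=
        Finset.sum_congr rfl fun i _ => Finset.sum_congr rfl fun j _ => hsplit i j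
    _ = (∑ i, ∑ j, C i j * D i j)
        + (1/η) * (∑ i, ∑ j, (Real.log (P i j) + 1) * D i j)
        + (1/η) * (∑ i, ∑ j, ∑ k, D i j * (V j k * (Real.log (Sm V W P i k) + 1))) := by
        simp [Finset.sum_add_distrib, Finset.mul_sum]
    _ = (∑ i, ∑ j, C i j * D i j) +
        (1/η) * ((∑ i, ∑ j, (Real.log (P i j) + 1) * D i j)
          + ∑ i, ∑ k, (Real.log (Sm V W P i k) + 1) * E i k) := by
        simp only [hswap]; ring
    _ = 0 := hzero

theorem stmt17 (n d : ℕ) (hn : 0 < n) (hd : 0 < d)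
    (η : ℝ) (hη : 0 < η)
    (C : Matrix (Fin n) (Fin n) ℝ) (V W : Matrix (Fin n) (Fin d) ℝ)
    (r c : Fin n → ℝ)
    (hslater : ∃ P : Matrix (Fin n) (Fin n) ℝ, (∀ i j, 0 < P i j) ∧
      (∀ i, ∑ j, P i j = r i) ∧ (∀ j, ∑ i, P i j = c j) ∧
      (∀ i k, 0 < (P * V - W) i k)) :
    sInf {z : ℝ | ∃ P : Matrix (Fin n) (Fin n) ℝ,
        (∀ i j, 0 ≤ P i j) ∧ (∀ i, ∑ j, P i j = r i) ∧ (∀ j, ∑ i, P i j = c j) ∧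
        (∀ i k, W i k ≤ (P * V) i k) ∧
        z = (∑ i, ∑ j, C i j * P i j) +
          (1 / η) * ((∑ i, ∑ j, ent (P i j)) + ∑ i, ∑ k, ent ((P * V - W) i k))} =
    sSup {z : ℝ | ∃ (x y : Fin n → ℝ) (A : Matrix (Fin n) (Fin d) ℝ),
        z = dualG η C V W r c x y A} := by
  have hηinv : (0:ℝ) < 1/η := by positivity
  have hη' : η ≠ 0 := ne_of_gt hη
  obtain ⟨Phat, hpos, hrhat, hchat, hshat⟩ := hslater
  have hshat' : ∀ i k, 0 < Sm V W (fun i j => Phat i j) i k := by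
    intro i k
    have h := hshat i k
    rw [Matrix.sub_apply, Matrix.mul_apply] at h
    simpa [Sm] using h
  have hrpos : ∀ i, 0 < r i := by
    intro i
    rw [← hrhat i]
    exact Finset.sum_pos (fun j _ => hpos i j) ⟨⟨0, hn⟩, mem_univ _⟩
  -- existence of a primal minimizer
  have hKne : (KSet V W r c).Nonempty :=
    ⟨fun i j => Phat i j, fun i j => (hpos i j).le, hrhat, hchat,
      fun i k => (hshat' i k).le⟩
  obtain ⟨P, hPK, hPmin⟩ := (KSet_compact V W r c fun i => (hrpos i).le).exists_isMinOn
    hKne (fObj_continuous η C V W).continuousOn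
  have hmin : ∀ Q ∈ KSet V W r c, fObj η C V W P ≤ fObj η C V W Q :=
    fun Q hQ => isMinOn_iff.mp hPmin Q hQ
  obtain ⟨hP0, hrP, hcP, hS0⟩ := hPK
  -- strict positivity of the minimizer
  have hallpos : (∀ i j, 0 < P i j) ∧ (∀ i k, 0 < Sm V W P i k) := by
    by_contra hcon
    set aF : (Fin n × Fin n) ⊕ (Fin n × Fin d) → ℝ :=
      Sum.elim (fun q => P q.1 q.2) (fun q => Sm V W P q.1 q.2) with haF
    set bF : (Fin n × Fin n) ⊕ (Fin n × Fin d) → ℝ :=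
      Sum.elim (fun q => Phat q.1 q.2 - P q.1 q.2)
        (fun q => Sm V W (fun i j => Phat i j) q.1 q.2 - Sm V W P q.1 q.2) with hbF
    have hm₀ : ∃ m₀, aF m₀ = 0 := by
      rcases not_and_or.mp hcon with h | h
      · push_neg at h; obtain ⟨i, j, hij⟩ := h
        exact ⟨Sum.inl (i, j), le_antisymm hij (hP0 i j)⟩
      · push_neg at h; obtain ⟨i, k, hik⟩ := h
        exact ⟨Sum.inr (i, k), le_antisymm hik (hS0 i k)⟩
    obtain ⟨m₀, hm₀⟩ := hm₀
    have haF0 : ∀ m, 0 ≤ aF m := by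
      rintro (⟨i, j⟩ | ⟨i, k⟩)
      · exact hP0 i j
      · exact hS0 i k
    have habF : ∀ m, 0 < aF m + bF m := by
      rintro (⟨i, j⟩ | ⟨i, k⟩)
      · simpa [haF, hbF] using hpos i j
      · simpa [haF, hbF] using hshat' i k
    obtain ⟨t, ht0, ht1, hlt⟩ := exists_small_t aF bF
      (η * ∑ i, ∑ j, C i j * (Phat i j - P i j)) m₀ haF0 habF hm₀
    set X : ℝ := ∑ i, ∑ j, C i j * (Phat i j - P i j) with hX
    set Q : Fin n → Fin n → ℝ := fun i j => P i j + t * (Phat i j - P i j) with hQ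
    have hQK : Q ∈ KSet V W r c := by
      refine ⟨fun i j => ?_, fun i => ?_, fun j => ?_, fun i k => ?_⟩
      · have h : Q i j = (1 - t) * P i j + t * Phat i j := by simp only [hQ]; ring
        rw [h]
        have := hP0 i j; have := (hpos i j).le
        nlinarith
      · have h : ∑ j, Q i j = (∑ j, P i j) + t * ((∑ j, Phat i j) - ∑ j, P i j) := by
          simp only [hQ]
          rw [Finset.sum_add_distrib, ← Finset.mul_sum, Finset.sum_sub_distrib]
        rw [h, hrP, hrhat]; ring
      · have h : ∑ i, Q i j = (∑ i, P i j) + t * ((∑ i, Phat i j) - ∑ i, P i j) := by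
          simp only [hQ]
          rw [Finset.sum_add_distrib, ← Finset.mul_sum, Finset.sum_sub_distrib]
        rw [h, hcP, hchat]; ring
      · have h : Sm V W Q i k
            = Sm V W P i k + t * (Sm V W (fun i j => Phat i j) i k - Sm V W P i k) := by
          rw [show Sm V W Q i k = Sm V W P i k + t * ∑ j, (Phat i j - P i j) * V j k from
            Sm_add_smul V W P (fun i j => Phat i j - P i j) t i k]
          congr 1
          rw [show (∑ j, (Phat i j - P i j) * V j k)
            = Sm V W (fun i j => Phat i j) i k - Sm V W P i k from by
              simp [Sm, sub_mul, Finset.sum_sub_distrib]]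
        rw [h]
        have := hS0 i k; have := (hshat' i k).le
        nlinarith
    have hsplitsum : ∀ u : ((Fin n × Fin n) ⊕ (Fin n × Fin d)) → ℝ,
        ∑ m, u m = (∑ i, ∑ j, u (Sum.inl (i, j))) + ∑ i, ∑ k, u (Sum.inr (i, k)) := by
      intro u
      rw [Fintype.sum_sum_type, Fintype.sum_prod_type, Fintype.sum_prod_type]
    have hCQ : ∑ i, ∑ j, C i j * Q i j = (∑ i, ∑ j, C i j * P i j) + t * X := by
      have h1 : ∀ (i j : Fin n), C i j * Q i j
          = C i j * P i j + t * (C i j * (Phat i j - P i j)) := by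
        intro i j; simp only [hQ]; ring
      calc ∑ i, ∑ j, C i j * Q i j
          = ∑ i, ∑ j, (C i j * P i j + t * (C i j * (Phat i j - P i j))) :=
            Finset.sum_congr rfl fun i _ => Finset.sum_congr rfl fun j _ => h1 i j
        _ = (∑ i, ∑ j, C i j * P i j) + t * X := by
            simp [Finset.sum_add_distrib, Finset.mul_sum, hX]
    have hSmQ : ∀ (i : Fin n) (k : Fin d), Sm V W Q i k
        = Sm V W P i k + t * (Sm V W (fun i j => Phat i j) i k - Sm V W P i k) := by
      intro i k
      rw [show Sm V W Q i k = Sm V W P i k + t * ∑ j, (Phat i j - P i j) * V j k from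
        Sm_add_smul V W P (fun i j => Phat i j - P i j) t i k]
      have h6 : (∑ j, (Phat i j - P i j) * V j k)
          = Sm V W (fun i j => Phat i j) i k - Sm V W P i k := by
        simp [Sm, sub_mul, Finset.sum_sub_distrib]
      rw [h6]
    have hEntQ : (∑ i, ∑ j, ent (Q i j)) + ∑ i, ∑ k, ent (Sm V W Q i k)
        = ∑ m, ent (aF m + t * bF m) := by
      rw [show (∑ i, ∑ k, ent (Sm V W Q i k)) = ∑ i, ∑ k, ent (Sm V W P i k
          + t * (Sm V W (fun i j => Phat i j) i k - Sm V W P i k)) from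
        Finset.sum_congr rfl fun i _ => Finset.sum_congr rfl fun k _ => by rw [hSmQ i k]]
      exact (hsplitsum fun m => ent (aF m + t * bF m)).symm
    have hEntP : (∑ i, ∑ j, ent (P i j)) + ∑ i, ∑ k, ent (Sm V W P i k)
        = ∑ m, ent (aF m) :=
      (hsplitsum fun m => ent (aF m)).symm
    have hlt2 : fObj η C V W Q < fObj η C V W P := by
      have e1 : fObj η C V W Q
          = ((∑ i, ∑ j, C i j * P i j) + t * X) + (1/η) * ∑ m, ent (aF m + t * bF m) := by
        rw [fObj, hCQ, hEntQ]
      have e2 : fObj η C V W P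
          = (∑ i, ∑ j, C i j * P i j) + (1/η) * ∑ m, ent (aF m) := by
        rw [fObj, hEntP]
      rw [e1, e2]
      have h4 := mul_lt_mul_of_pos_left hlt hηinv
      have h5 : (1/η) * ((∑ m, ent (aF m + t * bF m)) + t * (η * X))
          = (1/η) * (∑ m, ent (aF m + t * bF m)) + t * X := by
        field_simp
      linarith
    exact absurd (hmin Q hQK) (not_le.mpr hlt2)
  obtain ⟨hp, hs⟩ := hallpos
  -- stationarity: Lagrange multipliers
  set i0 : Fin n := ⟨0, hn⟩ with hi0
  set G : Fin n → Fin n → ℝ := fun i j => C i j + (1/η) * (Real.log (P i j) + 1)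
    + (1/η) * ∑ k, V j k * (Real.log (Sm V W P i k) + 1) with hG
  have hkey : ∀ (i j : Fin n), G i j + G i0 i0 - G i i0 - G i0 j = 0 := by
    intro i j
    set D : Fin n → Fin n → ℝ := fun i' j' =>
      ((if i' = i then (1:ℝ) else 0) - (if i' = i0 then 1 else 0)) *
        ((if j' = j then (1:ℝ) else 0) - (if j' = i0 then 1 else 0)) with hD
    have hDr : ∀ i', ∑ j', D i' j' = 0 := by
      intro i'
      simp only [hD]
      rw [← Finset.mul_sum]
      simp [Finset.sum_sub_distrib]
    have hDc : ∀ j', ∑ i', D i' j' = 0 := by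
      intro j'
      simp only [hD]
      rw [← Finset.sum_mul]
      simp [Finset.sum_sub_distrib]
    have h0 := stationary hη C V W r c P hmin hp hs hrP hcP D hDr hDc
    have h0' : ∑ i', ∑ j', D i' j' * G i' j' = 0 := h0
    have heval : ∑ i', ∑ j', D i' j' * G i' j'
        = G i j + G i0 i0 - G i i0 - G i0 j := by
      have hrow : ∀ i', ∑ j', D i' j' * G i' j'
          = ((if i' = i then (1:ℝ) else 0) - (if i' = i0 then 1 else 0)) *
            (G i' j - G i' i0) := by
        intro i'
        have e : ∀ j', D i' j' * G i' j'
            = ((if i' = i then (1:ℝ) else 0) - (if i' = i0 then 1 else 0)) *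
              (((if j' = j then (1:ℝ) else 0) - (if j' = i0 then 1 else 0)) * G i' j') := by
          intro j'; simp only [hD]; ring
        rw [Finset.sum_congr rfl fun j' _ => e j', ← Finset.mul_sum]
        congr 1
        simp [sub_mul, ite_mul, Finset.sum_sub_distrib]
      rw [Finset.sum_congr rfl fun i' _ => hrow i']
      have h7 : ∑ i', ((if i' = i then (1:ℝ) else 0) - (if i' = i0 then 1 else 0)) *
          (G i' j - G i' i0) = (G i j - G i i0) - (G i0 j - G i0 i0) := by
        simp [sub_mul, ite_mul, Finset.sum_sub_distrib]
      rw [h7]; ring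
    rw [heval] at h0'
    exact h0'
  set x : Fin n → ℝ := fun i => G i i0 - G i0 i0 with hx
  set y : Fin n → ℝ := fun j => G i0 j with hy
  set A : Matrix (Fin n) (Fin d) ℝ :=
    Matrix.of fun i k => -((1/η) * (Real.log (Sm V W P i k) + 1)) with hA
  have hAapp : ∀ (i : Fin n) (k : Fin d),
      A i k = -((1/η) * (Real.log (Sm V W P i k) + 1)) := fun i k => rfl
  have hxy : ∀ i j, x i + y j = G i j := by
    intro i j
    have := hkey i j
    simp only [hx, hy]
    linarith
  have hlog1 : ∀ (i j : Fin n),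
      η * (-(C i j) + (∑ k, A i k * V j k) + x i + y j) - 1 = Real.log (P i j) := by
    intro i j
    have hAs : (∑ k, A i k * V j k)
        = -((1/η) * ∑ k, V j k * (Real.log (Sm V W P i k) + 1)) := by
      rw [Finset.mul_sum, ← Finset.sum_neg_distrib]
      exact Finset.sum_congr rfl fun k _ => by rw [hAapp]; ring
    rw [hAs]
    have hGij : x i + y j = C i j + (1/η) * (Real.log (P i j) + 1)
        + (1/η) * ∑ k, V j k * (Real.log (Sm V W P i k) + 1) := hxy i j
    have e : η * (-(C i j) + -((1/η) * ∑ k, V j k * (Real.log (Sm V W P i k) + 1))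
          + x i + y j) - 1
        = η * ((x i + y j) - C i j
          - (1/η) * ∑ k, V j k * (Real.log (Sm V W P i k) + 1)) - 1 := by ring
    rw [e, hGij]
    field_simp
    ring
  have hexp1 : ∀ (i j : Fin n),
      Real.exp (η * (-(C i j) + (∑ k, A i k * V j k) + x i + y j) - 1) = P i j := by
    intro i j; rw [hlog1 i j]; exact Real.exp_log (hp i j)
  have hlog2 : ∀ (i : Fin n) (k : Fin d),
      -(η * A i k) - 1 = Real.log (Sm V W P i k) := by
    intro i k
    rw [hAapp]
    field_simp
    ring
  have hexp2 : ∀ (i : Fin n) (k : Fin d),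
      Real.exp (-(η * A i k) - 1) = Sm V W P i k := by
    intro i k; rw [hlog2 i k]; exact Real.exp_log (hs i k)
  have hdual : dualG η C V W r c x y A = fObj η C V W P := by
    have hL : dualG η C V W r c x y A
        = -(1/η) * (∑ i, ∑ j, P i j) + (∑ i, x i * r i) + (∑ j, y j * c j)
          + (∑ i, ∑ k, A i k * W i k) - (1/η) * ∑ i, ∑ k, Sm V W P i k := by
      rw [dualG]
      simp only [hexp1, hexp2]
    have hentP : ∑ i, ∑ j, ent (P i j)
        = η * (-(∑ i, ∑ j, C i j * P i j) + (∑ i, ∑ k, A i k * (∑ j, P i j * V j k))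
            + ∑ i, x i * r i + ∑ j, y j * c j) - ∑ i, ∑ j, P i j := by
      have h1 : ∀ (i j : Fin n), ent (P i j)
          = η * (P i j * (-(C i j) + (∑ k, A i k * V j k) + x i + y j)) - P i j := by
        intro i j; rw [ent, ← hlog1 i j]; ring
      calc ∑ i, ∑ j, ent (P i j)
          = ∑ i, ∑ j, (η * (P i j * (-(C i j) + (∑ k, A i k * V j k) + x i + y j)) - P i j) :=
            Finset.sum_congr rfl fun i _ => Finset.sum_congr rfl fun j _ => h1 i j
        _ = η * (∑ i, ∑ j, P i j * (-(C i j) + (∑ k, A i k * V j k) + x i + y j))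
            - ∑ i, ∑ j, P i j := by
            simp [Finset.sum_sub_distrib, Finset.mul_sum]
        _ = _ := by rw [sum_rearrange C V r c P hrP hcP x y A]
    have hentS : ∑ i, ∑ k, ent (Sm V W P i k)
        = -(η * ((∑ i, ∑ k, A i k * (∑ j, P i j * V j k)) - ∑ i, ∑ k, A i k * W i k))
          - ∑ i, ∑ k, Sm V W P i k := by
      have h1 : ∀ (i : Fin n) (k : Fin d), ent (Sm V W P i k)
          = -(η * (A i k * Sm V W P i k)) - Sm V W P i k := by
        intro i k; rw [ent, ← hlog2 i k]; ring
      have h2 : ∑ i, ∑ k, A i k * Sm V W P i k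
          = (∑ i, ∑ k, A i k * (∑ j, P i j * V j k)) - ∑ i, ∑ k, A i k * W i k := by
        simp [Sm, mul_sub, Finset.sum_sub_distrib]
      calc ∑ i, ∑ k, ent (Sm V W P i k)
          = ∑ i, ∑ k, (-(η * (A i k * Sm V W P i k)) - Sm V W P i k) :=
            Finset.sum_congr rfl fun i _ => Finset.sum_congr rfl fun k _ => h1 i k
        _ = -(η * (∑ i, ∑ k, A i k * Sm V W P i k)) - ∑ i, ∑ k, Sm V W P i k := by
            simp [Finset.sum_sub_distrib, Finset.mul_sum, Finset.sum_neg_distrib]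
        _ = _ := by rw [h2]
    rw [hL, fObj, hentP, hentS]
    field_simp
    ring
  -- conclusion
  have hub : ∀ z ∈ {z : ℝ | ∃ (x y : Fin n → ℝ) (A : Matrix (Fin n) (Fin d) ℝ),
      z = dualG η C V W r c x y A}, z ≤ fObj η C V W P := by
    rintro z ⟨x', y', A', rfl⟩
    exact weak_duality hη C V W r c P hP0 hrP hcP hS0 x' y' A'
  have hin_d : fObj η C V W P ∈ {z : ℝ | ∃ (x y : Fin n → ℝ) (A : Matrix (Fin n) (Fin d) ℝ),
      z = dualG η C V W r c x y A} := ⟨x, y, A, hdual.symm⟩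
  have hlb : ∀ z ∈ {z : ℝ | ∃ P : Matrix (Fin n) (Fin n) ℝ,
      (∀ i j, 0 ≤ P i j) ∧ (∀ i, ∑ j, P i j = r i) ∧ (∀ j, ∑ i, P i j = c j) ∧
      (∀ i k, W i k ≤ (P * V) i k) ∧
      z = (∑ i, ∑ j, C i j * P i j) +
        (1 / η) * ((∑ i, ∑ j, ent (P i j)) + ∑ i, ∑ k, ent ((P * V - W) i k))},
      fObj η C V W P ≤ z := by
    rintro z ⟨P', h0, h1, h2, h3, rfl⟩
    have hmem : (fun i j => P' i j) ∈ KSet V W r c := by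
      refine ⟨h0, h1, h2, fun i k => ?_⟩
      have h4 := h3 i k
      rw [Matrix.mul_apply] at h4
      simp only [Sm]
      linarith
    calc fObj η C V W P ≤ fObj η C V W (fun i j => P' i j) := hmin _ hmem
      _ = _ := by simp only [fObj, Sm, Matrix.mul_apply, Matrix.sub_apply]
  have hin_p : fObj η C V W P ∈ {z : ℝ | ∃ P : Matrix (Fin n) (Fin n) ℝ,
      (∀ i j, 0 ≤ P i j) ∧ (∀ i, ∑ j, P i j = r i) ∧ (∀ j, ∑ i, P i j = c j) ∧
      (∀ i k, W i k ≤ (P * V) i k) ∧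
      z = (∑ i, ∑ j, C i j * P i j) +
        (1 / η) * ((∑ i, ∑ j, ent (P i j)) + ∑ i, ∑ k, ent ((P * V - W) i k))} := by
    refine ⟨Matrix.of P, fun i j => hP0 i j, hrP, hcP, fun i k => ?_, ?_⟩
    · have h5 := hS0 i k
      simp only [Sm] at h5
      rw [Matrix.mul_apply]
      simp only [Matrix.of_apply]
      linarith
    · simp only [fObj, Sm, Matrix.mul_apply, Matrix.sub_apply, Matrix.of_apply]
  have h1eq : sInf {z : ℝ | ∃ P : Matrix (Fin n) (Fin n) ℝ,
      (∀ i j, 0 ≤ P i j) ∧ (∀ i, ∑ j, P i j = r i) ∧ (∀ j, ∑ i, P i j = c j) ∧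
      (∀ i k, W i k ≤ (P * V) i k) ∧
      z = (∑ i, ∑ j, C i j * P i j) +
        (1 / η) * ((∑ i, ∑ j, ent (P i j)) + ∑ i, ∑ k, ent ((P * V - W) i k))}
      = fObj η C V W P :=
    le_antisymm (csInf_le ⟨fObj η C V W P, fun z hz => hlb z hz⟩ hin_p)
      (le_csInf ⟨_, hin_p⟩ hlb)
  have h2eq : sSup {z : ℝ | ∃ (x y : Fin n → ℝ) (A : Matrix (Fin n) (Fin d) ℝ),
      z = dualG η C V W r c x y A} = fObj η C V W P :=
    le_antisymm (csSup_le ⟨_, hin_d⟩ hub)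
      (le_csSup ⟨fObj η C V W P, fun z hz => hub z hz⟩ hin_d)
  rw [h1eq, h2eq]

end
end
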